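/- arXiv:1309.5818 — 9 statements merged into one kernel-verified Lean document; each statement's English description precedes it below -/
import Mathlib

section
/- Let p : X → Y and q : Y → Z be morphisms of simplicial sets. If p is a Kan fibration that is surjective in every simplicial degree, and the composite q ∘ p : X → Z is a Kan fibration, then q : Y → Z is a Kan fibration. -/
/-!
A horn `Λ[n + 1, i] ⟶ Y` lifts along `p` to `X`; filling the lifted horn against the Kan
fibration `p ≫ q` and composing with `p` fills the original one against `q`.

Horns are lifted through generalized horns `Λ^S[n] ⊆ Δ[n]`, the unions of the faces opposite
to the vertices outside `S`: `Λ^{i}[n] = Λ[n, i]` and `Λ^univ[n] = ∅`. For `j ∉ S`, the complex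
`Λ^S[n + 1]` is `Λ^(insert j S)[n + 1]` with the face `δ j` attached along `Λ^(δ j⁻¹ S)[n]`,
a pushout of a generalized horn inclusion of dimension `n`. By induction on `n` and `S`, `p` has
the right lifting property against `Λ^S[n] ⊆ Δ[n]` for nonempty `S` (horns, and for `n = 0`
surjectivity, being the base cases). Attaching faces one at a time to `Λ^univ[n + 1] = ∅` then
lifts every map out of `Λ^S[n + 1]`.
-/

open CategoryTheory Simplicial SSet

/-- A morphism of simplicial sets is a *Kan fibration* if it has the right lifting property
with respect to every horn inclusion `Λ[n, k] ⟶ Δ[n]` for `n ≥ 1` and `0 ≤ k ≤ n`. -/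
def IsKanFibration {X Y : SSet} (p : X ⟶ Y) : Prop :=
  ∀ (n : ℕ) (i : Fin (n + 2)), HasLiftingProperty (horn (n + 1) i).ι p

universe u

lemma CategoryTheory.hasLiftingProperty_of_comp_of_exists_lift {C : Type*} [Category C]
    {A B X Y Z : C} (i : A ⟶ B) (p : X ⟶ Y) (q : Y ⟶ Z) [HasLiftingProperty i (p ≫ q)]
    (hlift : ∀ f : A ⟶ Y, ∃ f' : A ⟶ X, f' ≫ p = f) : HasLiftingProperty i q where
  sq_hasLift {f g} sq := by
    obtain ⟨f', rfl⟩ := hlift f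
    have sq' : CommSq f' i (p ≫ q) g := ⟨by rw [← Category.assoc, sq.w]⟩
    exact ⟨⟨{ l := sq'.lift ≫ p
              fac_left := by rw [← Category.assoc, sq'.fac_left]
              fac_right := by rw [Category.assoc, sq'.fac_right] }⟩⟩

namespace SSet

namespace Subcomplex

variable {K L : SSet.{u}} (f : K ⟶ L) (A : L.Subcomplex)

lemma range_preimage_ι_comp : range ((A.preimage f).ι ≫ f) = A ⊓ range f := by
  ext m x
  constructor
  · rintro ⟨⟨y, hy⟩, rfl⟩
    exact ⟨hy, y, rfl⟩
  · rintro ⟨hx, y, rfl⟩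
    exact ⟨⟨y, hx⟩, rfl⟩

/-- Since `f` is mono, `A ⟶ A ⊔ range f` is a pushout of `A.preimage f ⟶ K`. -/
lemma hasLiftingProperty_homOfLE_of_sup_range_eq [Mono f] {B : L.Subcomplex} (h : A ≤ B)
    (hB : A ⊔ range f = B) {E F : SSet.{u}} (p : E ⟶ F) [HasLiftingProperty (A.preimage f).ι p] :
    HasLiftingProperty (homOfLE h) p := by
  subst hB
  let e : Arrow.mk (A.preimage f).ι ≅
      Arrow.mk (homOfLE (inf_le_right : A ⊓ range f ≤ range f)) :=
    Arrow.isoMk (asIso (toRange _) ≪≫ Subcomplex.eqToIso (range_preimage_ι_comp f A))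
      (asIso (toRange f)) rfl
  have := HasLiftingProperty.of_arrow_iso_left e p
  exact (BicartSq.isPushout ⟨rfl, rfl⟩).hasLiftingProperty p

end Subcomplex

def generalizedHorn (n : ℕ) (S : Set (Fin (n + 1))) : (Δ[n] : SSet.{u}).Subcomplex where
  obj _ := {s | ∃ j ∉ S, j ∉ Set.range (stdSimplex.asOrderHom s)}
  map _ _ := fun ⟨j, hjS, hj⟩ => ⟨j, hjS, fun h => hj (Set.range_comp_subset_range _ _ h)⟩

variable {n : ℕ}

lemma mem_generalizedHorn_iff (S : Set (Fin (n + 1))) {m : SimplexCategoryᵒᵖ} (s : Δ[n].obj m) :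
    s ∈ (generalizedHorn.{u} n S).obj m ↔ ∃ j ∉ S, j ∉ Set.range (stdSimplex.asOrderHom s) :=
  Iff.rfl

lemma horn_eq_generalizedHorn (i : Fin (n + 1)) : horn.{u} n i = generalizedHorn n {i} := by
  ext m s
  simp [mem_horn_iff, mem_generalizedHorn_iff, Set.ne_univ_iff_exists_notMem]

lemma generalizedHorn_univ : generalizedHorn.{u} n Set.univ = ⊥ := by
  ext m s
  simp [mem_generalizedHorn_iff]

lemma generalizedHorn_anti {S S' : Set (Fin (n + 1))} (h : S' ⊆ S) :
    generalizedHorn.{u} n S ≤ generalizedHorn n S' :=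
  fun _ _ ⟨j, hjS, hj⟩ => ⟨j, fun hjS' => hjS (h hjS'), hj⟩

lemma asOrderHom_δ_app (j : Fin (n + 2)) {m : SimplexCategoryᵒᵖ} (s : Δ[n].obj m) :
    stdSimplex.asOrderHom ((stdSimplex.δ j).app m s) = j.succAbove ∘ stdSimplex.asOrderHom s :=
  rfl

lemma generalizedHorn_preimage_δ {S : Set (Fin (n + 2))} {j : Fin (n + 2)} (hj : j ∈ S) :
    (generalizedHorn.{u} (n + 1) S).preimage (stdSimplex.δ j) =
      generalizedHorn n (j.succAbove ⁻¹' S) := by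
  ext m s
  simp only [Subcomplex.preimage_obj, Set.mem_preimage, mem_generalizedHorn_iff, asOrderHom_δ_app,
    Set.range_comp]
  constructor
  · rintro ⟨k, hkS, hk⟩
    obtain ⟨t, rfl⟩ := Fin.exists_succAbove_eq (ne_of_mem_of_not_mem hj hkS).symm
    exact ⟨t, hkS, fun ht => hk (Set.mem_image_of_mem _ ht)⟩
  · rintro ⟨t, htS, ht⟩
    exact ⟨j.succAbove t, htS, fun h => ht (Fin.succAbove_right_injective.mem_set_image.1 h)⟩

lemma generalizedHorn_insert_sup_range_δ {S : Set (Fin (n + 2))} {j : Fin (n + 2)} (hj : j ∉ S) :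
    generalizedHorn.{u} (n + 1) (insert j S) ⊔ Subcomplex.range (stdSimplex.δ j) =
      generalizedHorn (n + 1) S := by
  refine le_antisymm (sup_le (generalizedHorn_anti (Set.subset_insert j S)) ?_) ?_
  · rintro m _ ⟨s, rfl⟩
    exact ⟨j, hj, by simp [asOrderHom_δ_app, Fin.succAbove_ne]⟩
  · rintro m s ⟨k, hkS, hk⟩
    by_cases hkj : k = j
    · subst hkj
      right
      obtain ⟨⟨d⟩⟩ := m
      rw [stdSimplex.range_δ, stdSimplex.mem_face_iff]
      exact fun i => by simpa using (fun h => hk ⟨i, h⟩ : s i ≠ k)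
    · exact Or.inl ⟨k, by simp [hkj, hkS], hk⟩

section Lifting

variable {X Y : SSet.{u}} (p : X ⟶ Y)

lemma hasLiftingProperty_bot_ι (hsurj : Function.Surjective (p.app (Opposite.op ⦋n⦌))) :
    HasLiftingProperty (⊥ : (Δ[n] : SSet.{u}).Subcomplex).ι p := by
  refine ⟨fun {f g} sq => ?_⟩
  obtain ⟨x, hx⟩ := hsurj (yonedaEquiv g)
  exact ⟨⟨{ l := yonedaEquiv.symm x
            fac_left := Subsingleton.elim _ _
            fac_right := yonedaEquiv.injective (by
              rw [yonedaEquiv_comp, Equiv.apply_symm_apply, hx]) }⟩⟩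

lemma hasLiftingProperty_homOfLE_generalizedHorn_insert {S : Set (Fin (n + 2))} {j : Fin (n + 2)}
    (hj : j ∉ S) (hS : S.Nonempty)
    (hfaces : ∀ T : Set (Fin (n + 1)), T.Nonempty → HasLiftingProperty (generalizedHorn n T).ι p) :
    HasLiftingProperty
      (Subcomplex.homOfLE (generalizedHorn_anti.{u} (Set.subset_insert j S))) p := by
  have : HasLiftingProperty
      ((generalizedHorn (n + 1) (insert j S)).preimage (stdSimplex.δ j)).ι p := by
    rw [generalizedHorn_preimage_δ (Set.mem_insert j S)]
    obtain ⟨k, hk⟩ := hS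
    obtain ⟨t, rfl⟩ := Fin.exists_succAbove_eq (ne_of_mem_of_not_mem hk hj)
    exact hfaces _ ⟨t, Set.mem_insert_of_mem j hk⟩
  exact Subcomplex.hasLiftingProperty_homOfLE_of_sup_range_eq _ _ _
    (generalizedHorn_insert_sup_range_δ hj) p

lemma hasLiftingProperty_generalizedHorn_ι (hp : IsKanFibration p)
    (hsurj : ∀ m, Function.Surjective (p.app m)) :
    ∀ (n : ℕ) (S : Set (Fin (n + 1))), S.Nonempty →
      HasLiftingProperty (generalizedHorn.{u} n S).ι p := by
  intro n
  induction n with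
  | zero =>
    rintro S ⟨s, hs⟩
    obtain rfl : S = Set.univ :=
      Set.eq_univ_of_forall fun x => Subsingleton.elim (α := Fin 1) s x ▸ hs
    rw [generalizedHorn_univ]
    exact hasLiftingProperty_bot_ι p (hsurj _)
  | succ n ih =>
    intro S
    induction S, S.toFinite using Set.Finite.induction_on with
    | empty => exact fun h => absurd h Set.not_nonempty_empty
    | @insert j S hj _ hS' =>
      intro _
      rcases S.eq_empty_or_nonempty with rfl | hS
      · rw [insert_empty_eq, ← horn_eq_generalizedHorn]
        exact hp n j
      · have := hasLiftingProperty_homOfLE_generalizedHorn_insert p hj hS ih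
        have := hS' hS
        rw [← Subcomplex.homOfLE_ι (generalizedHorn_anti.{u} (Set.subset_insert j S))]
        infer_instance

lemma exists_lift_of_generalizedHorn (hp : IsKanFibration p)
    (hsurj : ∀ m, Function.Surjective (p.app m)) {S : Set (Fin (n + 2))} (hS : S.Nonempty) :
    ∀ f : (generalizedHorn.{u} (n + 1) S : SSet) ⟶ Y, ∃ f' : _ ⟶ X, f' ≫ p = f := by
  obtain ⟨R, hR⟩ : ∃ R, Sᶜ = R := ⟨_, rfl⟩
  induction R, R.toFinite using Set.Finite.induction_on generalizing S with
  | empty =>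
    rw [Set.compl_empty_iff.1 hR, generalizedHorn_univ]
    exact fun f => ⟨default, Subsingleton.elim _ _⟩
  | @insert j R hj _ ih =>
    have hjS : j ∉ S := fun h => (hR ▸ Set.mem_insert j R : j ∈ Sᶜ) h
    intro f
    obtain ⟨g, hg⟩ := ih (S := insert j S) (Set.insert_nonempty j S)
      (by rw [← Set.union_singleton, Set.compl_union, hR, ← Set.sdiff_eq,
        Set.insert_sdiff_self_of_notMem hj])
      (Subcomplex.homOfLE (generalizedHorn_anti (Set.subset_insert j S)) ≫ f)
    have := hasLiftingProperty_homOfLE_generalizedHorn_insert p hjS hS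
      (hasLiftingProperty_generalizedHorn_ι p hp hsurj n)
    have sq : CommSq g (Subcomplex.homOfLE _) p f := ⟨hg⟩
    exact ⟨sq.lift, sq.fac_right⟩

end Lifting

end SSet

/-- If `p : X → Y` is a Kan fibration which is surjective in every simplicial degree and the
composite `q ∘ p : X → Z` is a Kan fibration, then `q : Y → Z` is a Kan fibration. -/
theorem kanFibration_of_comp {X Y Z : SSet} (p : X ⟶ Y) (q : Y ⟶ Z)
    (hp : IsKanFibration p) (hsurj : ∀ n, Function.Surjective (p.app n))
    (hqp : IsKanFibration (p ≫ q)) : IsKanFibration q := by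
  intro n i
  have := hqp n i
  refine hasLiftingProperty_of_comp_of_exists_lift _ p q ?_
  rw [horn_eq_generalizedHorn]
  exact exists_lift_of_generalizedHorn p hp hsurj (Set.singleton_nonempty i)
end

section
/- Let G be a simplicial group acting freely on the right on a simplicial set X, and let q : X → Y be a quotient map for this action. Then q is a Kan fibration. -/
open CategoryTheory Simplicial SSet

/-- A right action of a simplicial group `G` on a simplicial set `X`: a right action of the
group `G n` on the set `X n` in every simplicial degree, compatible with all simplicial
structure maps. -/
structure SimplicialRightAction (G : SimplexCategoryᵒᵖ ⥤ GrpCat) (X : SSet) where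
  act : ∀ n : SimplexCategoryᵒᵖ, X.obj n → G.obj n → X.obj n
  act_one : ∀ (n : SimplexCategoryᵒᵖ) (x : X.obj n), act n x 1 = x
  act_mul : ∀ (n : SimplexCategoryᵒᵖ) (x : X.obj n) (g h : G.obj n),
    act n (act n x g) h = act n x (g * h)
  act_map : ∀ {m n : SimplexCategoryᵒᵖ} (α : m ⟶ n) (x : X.obj m) (g : G.obj m),
    X.map α (act m x g) = act n (X.map α x) (G.map α g)

/-- The action is *free* if `x · g = x` implies `g = 1`. -/
def SimplicialRightAction.IsFree {G : SimplexCategoryᵒᵖ ⥤ GrpCat} {X : SSet}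
    (a : SimplicialRightAction G X) : Prop :=
  ∀ (n : SimplexCategoryᵒᵖ) (x : X.obj n) (g : G.obj n), a.act n x g = x → g = 1

/-- A morphism `q : X ⟶ Y` is a *quotient map* for the action if it is degreewise surjective
and identifies exactly the orbits of the action. -/
def SimplicialRightAction.IsQuotientMap {G : SimplexCategoryᵒᵖ ⥤ GrpCat} {X : SSet}
    (a : SimplicialRightAction G X) {Y : SSet} (q : X ⟶ Y) : Prop :=
  (∀ n : SimplexCategoryᵒᵖ, Function.Surjective (q.app n)) ∧
    ∀ (n : SimplexCategoryᵒᵖ) (x x' : X.obj n),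
      q.app n x = q.app n x' ↔ ∃ g : G.obj n, x' = a.act n x g

/-!
Lift the bottom simplex to some `x`. By freeness, every face of the horn is the translate of the
corresponding face of `x` by a unique element of `G`, and uniqueness makes these elements agree
on common subfaces: they form a horn in `G`. Simplicial groups satisfy the Kan condition
(Moore), so this horn has a filler `w`, and `x · w` is the required lift.

Moore's filler is built one face at a time: `w ↦ w · sₛ((dᵣ w)⁻¹ gᵣ)`, with `s = r` below the
missing face `k` and `s = r - 1` above it, corrects face `r` without disturbing faces already
corrected, provided they are treated in the order `0, …, k - 1, n + 1, …, k + 1`.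
-/

open SimplexCategory Opposite

lemma SimplexCategory.eq_of_σ_comp_δ_apply_eq {n : ℕ} {s : Fin (n + 1)} {r : Fin (n + 2)}
    (hrs : r = s.castSucc ∨ r = s.succ) {y j : Fin (n + 2)}
    (hy : (σ s ≫ δ r).toOrderHom y = j) (hjs : j ≠ s.castSucc) (hjs' : j ≠ s.succ) : y = j := by
  change r.succAbove (s.predAbove y) = j at hy
  subst hy
  rw [Fin.ext_iff]
  rw [Ne, Fin.ext_iff] at hjs hjs'
  rcases hrs with rfl | rfl <;> unfold Fin.succAbove Fin.predAbove at * <;>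
    split_ifs at hjs hjs' ⊢ <;>
    simp only [Fin.lt_def, Fin.val_castSucc, Fin.val_pred, Fin.coe_castPred, Fin.val_succ] at * <;>
    grind

namespace SSet.horn

lemma map_face_eq_map_face {n : ℕ} {i j l : Fin (n + 2)} (hj : j ≠ i) (hl : l ≠ i)
    {m : SimplexCategory} {u v : m ⟶ ⦋n⦌} (huv : u ≫ δ j = v ≫ δ l) :
    (Λ[n + 1, i] : SSet).map u.op (face i j hj) = (Λ[n + 1, i] : SSet).map v.op (face i l hl) := by
  rw [← yonedaEquiv_ι, ← yonedaEquiv_ι, yonedaEquiv_naturality, yonedaEquiv_naturality]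
  congr 1
  rw [← cancel_mono Λ[n + 1, i].ι, Category.assoc, Category.assoc, ι_ι, ι_ι]
  have h := congrArg SSet.stdSimplex.map huv
  rwa [SSet.stdSimplex.map_comp, SSet.stdSimplex.map_comp] at h

lemma ι_comp_app_face {Z : SSet} {n : ℕ} {i : Fin (n + 2)} (σ : Δ[n + 1] ⟶ Z) (j : Fin (n + 2))
    (hj : j ≠ i) :
    (Λ[n + 1, i].ι ≫ σ).app _ (face i j hj) = Z.map (δ j).op (yonedaEquiv σ) := by
  rw [← yonedaEquiv_ι, ← yonedaEquiv_comp, ι_ι_assoc, yonedaEquiv_naturality]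
  rfl

end SSet.horn

namespace SimplicialGroup

variable {G : SimplexCategoryᵒᵖ ⥤ GrpCat} {n : ℕ} {k : Fin (n + 2)}

variable (G k) in
def IsHornCompatible (g : ∀ j : Fin (n + 2), j ≠ k → G.obj (op ⦋n⦌)) : Prop :=
  ∀ (j l : Fin (n + 2)) (hj : j ≠ k) (hl : l ≠ k) {m : SimplexCategory} (u v : m ⟶ ⦋n⦌),
    u ≫ δ j = v ≫ δ l → G.map u.op (g j hj) = G.map v.op (g l hl)

variable {g : ∀ j : Fin (n + 2), j ≠ k → G.obj (op ⦋n⦌)}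

variable (g) in
def HasFace (w : G.obj (op ⦋n + 1⦌)) (j : Fin (n + 2)) : Prop :=
  ∀ hj : j ≠ k, G.map (δ j).op w = g j hj

lemma map_inv_map_δ_mul_eq_one (hg : IsHornCompatible G k g) {w : G.obj (op ⦋n + 1⦌)}
    {j r : Fin (n + 2)} (hj : j ≠ k) (hr : r ≠ k) (hw : HasFace g w j)
    {m : SimplexCategory} (u v : m ⟶ ⦋n⦌) (huv : u ≫ δ r = v ≫ δ j) :
    G.map u.op ((G.map (δ r).op w)⁻¹ * g r hr) = 1 := by
  rw [map_mul, map_inv, ← Functor.map_comp_apply, ← op_comp, huv, op_comp,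
    Functor.map_comp_apply, hw hj, hg r j hr hj u v huv, inv_mul_cancel]

lemma exists_hasFace_insert (hg : IsHornCompatible G k g) {P : Fin (n + 2) → Prop}
    {w : G.obj (op ⦋n + 1⦌)} (hw : ∀ j, P j → HasFace g w j) {s : Fin (n + 1)}
    {r : Fin (n + 2)} (hr : r ≠ k) (hrs : r = s.castSucc ∨ r = s.succ)
    (hP : ∀ j, P j → j ≠ s.castSucc ∧ j ≠ s.succ) :
    ∃ w', ∀ j, P j ∨ j = r → HasFace g w' j := by
  refine ⟨w * G.map (σ s).op ((G.map (δ r).op w)⁻¹ * g r hr), ?_⟩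
  rintro j (hPj | rfl) hj
  · -- `δ j ≫ σ s ≫ δ r` misses `j`, so the correction restricted to face `j` is trivial
    obtain ⟨v, hv⟩ := eq_comp_δ_of_not_surjective' (δ j ≫ σ s ≫ δ r) j fun y hy =>
      Fin.succAbove_ne j y (eq_of_σ_comp_δ_apply_eq hrs hy (hP j hPj).1 (hP j hPj).2)
    rw [map_mul, ← Functor.map_comp_apply, ← op_comp, map_inv_map_δ_mul_eq_one hg hj hr (hw j hPj)
      _ v (by simpa only [Category.assoc] using hv), mul_one, hw j hPj hj]
  · have hδσ : δ j ≫ σ s = 𝟙 _ := hrs.elim δ_comp_σ_self' δ_comp_σ_succ'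
    rw [map_mul, ← Functor.map_comp_apply, ← op_comp, hδσ, op_id, G.map_id]
    exact mul_inv_cancel_left _ _

lemma exists_forall_lt_hasFace (hg : IsHornCompatible G k g) {a : ℕ} (ha : a ≤ k.val) :
    ∃ w, ∀ j : Fin (n + 2), j.val < a → HasFace g w j := by
  induction a with
  | zero => exact ⟨1, fun j hj => absurd hj (Nat.not_lt_zero _)⟩
  | succ a ih =>
    obtain ⟨w, hw⟩ := ih (by omega)
    obtain ⟨w', hw'⟩ := exists_hasFace_insert hg hw (s := ⟨a, by omega⟩)
      (r := ⟨a, by omega⟩) (Fin.ne_of_val_ne (by simp; omega)) (.inl rfl)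
      fun j hj => ⟨Fin.ne_of_val_ne (by simp; omega), Fin.ne_of_val_ne (by simp; omega)⟩
    refine ⟨w', fun j hj => hw' j ?_⟩
    by_cases hja : j.val = a
    · exact .inr (Fin.ext hja)
    · exact .inl (by omega)

lemma exists_forall_lt_or_lt_hasFace (hg : IsHornCompatible G k g) {b : ℕ} (hkb : k.val ≤ b)
    (hb : b ≤ n + 1) : ∃ w, ∀ j : Fin (n + 2), j.val < k.val ∨ b < j.val → HasFace g w j := by
  induction hb using Nat.decreasingInduction with
  | self =>
    obtain ⟨w, hw⟩ := exists_forall_lt_hasFace hg le_rfl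
    exact ⟨w, fun j hj => hw j (hj.resolve_right (by omega))⟩
  | of_succ b hb ih =>
    obtain ⟨w, hw⟩ := ih (by omega)
    obtain ⟨w', hw'⟩ := exists_hasFace_insert hg hw (s := ⟨b, by omega⟩)
      (r := ⟨b + 1, by omega⟩) (Fin.ne_of_val_ne (by simp; omega)) (.inr rfl)
      fun j hj => ⟨Fin.ne_of_val_ne (by simp; omega), Fin.ne_of_val_ne (by simp; omega)⟩
    refine ⟨w', fun j hj => hw' j ?_⟩
    by_cases hjb : j.val = b + 1
    · exact .inr (Fin.ext hjb)
    · exact .inl (by omega)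

theorem IsHornCompatible.exists_hasFace (hg : IsHornCompatible G k g) :
    ∃ w : G.obj (op ⦋n + 1⦌), ∀ j, HasFace g w j := by
  obtain ⟨w, hw⟩ := exists_forall_lt_or_lt_hasFace hg le_rfl k.is_le
  exact ⟨w, fun j hj => hw j (Nat.lt_or_gt_of_ne (Fin.val_ne_of_ne hj)) hj⟩

end SimplicialGroup

namespace SimplicialRightAction

variable {G : SimplexCategoryᵒᵖ ⥤ GrpCat} {X : SSet} (a : SimplicialRightAction G X)

lemma act_left_cancel (hfree : a.IsFree) {n : SimplexCategoryᵒᵖ} {x : X.obj n}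
    {g h : G.obj n} (hgh : a.act n x g = a.act n x h) : g = h := by
  refine mul_inv_eq_one.mp (hfree n x _ ?_)
  rw [← a.act_mul, hgh, a.act_mul, mul_inv_cancel, a.act_one]

lemma exists_isHornCompatible (hfree : a.IsFree) {n : ℕ} {i : Fin (n + 2)}
    (f : (Λ[n + 1, i] : SSet) ⟶ X) (x : X _⦋n + 1⦌)
    (hf : ∀ j hj, ∃ g, f.app _ (horn.face i j hj) = a.act _ (X.map (δ j).op x) g) :
    ∃ γ : ∀ j, j ≠ i → G.obj (op ⦋n⦌), SimplicialGroup.IsHornCompatible G i γ ∧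
      ∀ j hj, f.app _ (horn.face i j hj) = a.act _ (X.map (δ j).op x) (γ j hj) := by
  choose γ hγ using hf
  refine ⟨γ, fun j l hj hl m u v huv => a.act_left_cancel hfree (x := X.map (u ≫ δ j).op x) ?_, hγ⟩
  calc a.act _ (X.map (u ≫ δ j).op x) (G.map u.op (γ j hj))
      = X.map u.op (f.app _ (horn.face i j hj)) := by
        rw [hγ, a.act_map, op_comp, Functor.map_comp_apply]
    _ = X.map v.op (f.app _ (horn.face i l hl)) := by
        rw [← NatTrans.naturality_apply, ← NatTrans.naturality_apply,
          horn.map_face_eq_map_face hj hl huv]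
    _ = a.act _ (X.map (u ≫ δ j).op x) (G.map v.op (γ l hl)) := by
        rw [hγ, a.act_map, huv, op_comp, Functor.map_comp_apply]

end SimplicialRightAction

/-- If a simplicial group `G` acts freely on the right on a simplicial set `X` and
`q : X → Y` is a quotient map for this action, then `q` is a Kan fibration. -/
theorem kanFibration_of_quotient_free_action (G : SimplexCategoryᵒᵖ ⥤ GrpCat) (X Y : SSet)
    (a : SimplicialRightAction G X) (hfree : a.IsFree)
    (q : X ⟶ Y) (hq : a.IsQuotientMap q) : IsKanFibration q := by
  refine fun n i => ⟨fun {f b} sq => ?_⟩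
  obtain ⟨x, hx⟩ := hq.1 _ (yonedaEquiv b)
  have hface : ∀ j hj, q.app _ (X.map (δ j).op x) = q.app _ (f.app _ (horn.face i j hj)) := by
    intro j hj
    rw [NatTrans.naturality_apply, hx, ← horn.ι_comp_app_face, ← sq.w]
    rfl
  obtain ⟨γ, hγ, hfγ⟩ :=
    a.exists_isHornCompatible hfree f x fun j hj => (hq.2 _ _ _).1 (hface j hj)
  obtain ⟨w, hw⟩ := hγ.exists_hasFace
  refine ⟨⟨{ l := yonedaEquiv.symm (a.act _ x w), fac_left := ?_, fac_right := ?_ }⟩⟩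
  · refine horn.hom_ext _ _ fun j hj => ?_
    rw [horn.ι_comp_app_face, Equiv.apply_symm_apply, a.act_map, hw j hj, ← hfγ]
  · apply yonedaEquiv.injective
    rw [yonedaEquiv_comp, Equiv.apply_symm_apply, ← hx, eq_comm, hq.2]
    exact ⟨w, rfl⟩
end

section
/- Let G be a simplicial group, H a simplicial subgroup of G (a collection of subgroups Hₙ ≤ Gₙ closed under all simplicial structure maps), and X a simplicial set with a free right G-action. Let q_H : X → Y be a quotient map for the restricted H-action, let q_G : X → Z be a quotient map for the G-action, and let r : Y → Z be a morphism of simplicial sets with r ∘ q_H = q_G. Then r is a Kan fibration. -/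
open CategoryTheory Simplicial SSet

/-!
Lift the base simplex `z` to `x` with `q_G x = z`. Each face `y_j` of a horn in `Y` over `z`
is `q_H (d_j x · g_j)` for some `g_j`, and freeness makes the `g_j` agree on common faces
modulo `H`. Moore's horn-filling algorithm for simplicial groups, run modulo `H`, yields `w`
with `d_j w ≡ g_j (mod H)` for `j ≠ k`; then `q_H (x · w)` fills the horn over `z`.
-/

open SimplexCategory Opposite

section HornFillerModSubgroup

variable {G : SimplexCategoryᵒᵖ ⥤ GrpCat} (H : ∀ n : SimplexCategoryᵒᵖ, Subgroup (G.obj n))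

def IsSimplicialSubgroup : Prop :=
  ∀ {p q : SimplexCategoryᵒᵖ} (α : p ⟶ q), ∀ g ∈ H p, G.map α g ∈ H q

def IsHornModSubgroup {n : ℕ} (k : Fin (n + 2)) (g : Fin (n + 2) → G.obj (op ⦋n⦌)) : Prop :=
  ∀ i j : Fin (n + 2), i ≠ k → j ≠ k → ∀ {p : SimplexCategory} (u v : p ⟶ ⦋n⦌),
    u ≫ δ j = v ≫ δ i → (G.map u.op (g j))⁻¹ * G.map v.op (g i) ∈ H (op p)

/-- One step of Moore's algorithm: when `σ a` is a section of `δ T`, this corrects the `T`-th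
face of `u` to `g T`. -/
def hornCorrection {n : ℕ} (g : Fin (n + 2) → G.obj (op ⦋n⦌)) (u : G.obj (op ⦋n + 1⦌))
    (T : Fin (n + 2)) (a : Fin (n + 1)) : G.obj (op ⦋n + 1⦌) :=
  u * G.map (σ a).op ((G.map (δ T).op u)⁻¹ * g T)

lemma map_δ_hornCorrection_self {n : ℕ} (g : Fin (n + 2) → G.obj (op ⦋n⦌))
    (u : G.obj (op ⦋n + 1⦌)) {T : Fin (n + 2)} {a : Fin (n + 1)} (hTa : δ T ≫ σ a = 𝟙 _) :
    G.map (δ T).op (hornCorrection g u T a) = g T := by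
  have hsection : G.map (δ T).op (G.map (σ a).op ((G.map (δ T).op u)⁻¹ * g T)) =
      (G.map (δ T).op u)⁻¹ * g T := by
    rw [← Functor.map_comp_apply, ← op_comp, hTa]
    simp
  rw [hornCorrection, map_mul, hsection, mul_inv_cancel_left]

variable {H}

lemma hornCorrection_face_mem {m : ℕ} (hH : IsSimplicialSubgroup H)
    {k : Fin (m + 3)} {g : Fin (m + 3) → G.obj (op ⦋m + 1⦌)} (hg : IsHornModSubgroup H k g)
    {u : G.obj (op ⦋m + 2⦌)} {T j : Fin (m + 3)} (hT : T ≠ k) (hj : j ≠ k)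
    {a i x : Fin (m + 2)} {c : Fin (m + 1)}
    (e₁ : δ j ≫ σ a = σ c ≫ δ i) (e₂ : δ x ≫ δ j = δ i ≫ δ T)
    (hu : (g j)⁻¹ * G.map (δ j).op u ∈ H (op ⦋m + 1⦌)) :
    (g j)⁻¹ * G.map (δ j).op (hornCorrection g u T a) ∈ H (op ⦋m + 1⦌) := by
  have h₁ (y) : G.map (δ j).op (G.map (σ a).op y) = G.map (σ c).op (G.map (δ i).op y) := by
    rw [← Functor.map_comp_apply, ← op_comp, e₁, op_comp, Functor.map_comp_apply]
  have h₂ (y) : G.map (δ i).op (G.map (δ T).op y) = G.map (δ x).op (G.map (δ j).op y) := by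
    rw [← Functor.map_comp_apply, ← op_comp, ← e₂, op_comp, Functor.map_comp_apply]
  -- the new face is the old one times the image of an element of `H` under a degeneracy
  have key : (g j)⁻¹ * G.map (δ j).op (hornCorrection g u T a) =
      ((g j)⁻¹ * G.map (δ j).op u) *
        G.map (σ c).op ((G.map (δ x).op ((g j)⁻¹ * G.map (δ j).op u))⁻¹ *
          ((G.map (δ x).op (g j))⁻¹ * G.map (δ i).op (g T))) := by
    simp only [hornCorrection, map_mul, map_inv, h₁, h₂]
    group
  rw [key]
  exact mul_mem hu (hH _ _ (mul_mem (inv_mem (hH _ _ hu)) (hg T j hT hj (δ x) (δ i) e₂)))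

lemma hornCorrection_face_mem_of_lt {n : ℕ} (hH : IsSimplicialSubgroup H)
    {k : Fin (n + 2)} {g : Fin (n + 2) → G.obj (op ⦋n⦌)} (hg : IsHornModSubgroup H k g)
    {u : G.obj (op ⦋n + 1⦌)} {T j : Fin (n + 2)} (hT : T ≠ k) (hj : j ≠ k) {a : Fin (n + 1)}
    (hja : j.val < a.val) (hjT : j.val < T.val)
    (hu : (g j)⁻¹ * G.map (δ j).op u ∈ H (op ⦋n⦌)) :
    (g j)⁻¹ * G.map (δ j).op (hornCorrection g u T a) ∈ H (op ⦋n⦌) := by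
  obtain ⟨m, rfl⟩ : ∃ m, n = m + 1 := ⟨n - 1, by omega⟩
  obtain ⟨i, rfl⟩ : ∃ i : Fin (m + 2), i.castSucc = j := ⟨⟨j, by omega⟩, rfl⟩
  obtain ⟨c, rfl⟩ : ∃ c : Fin (m + 1), c.succ = a :=
    ⟨⟨a - 1, by omega⟩, Fin.ext (by simp; omega)⟩
  obtain ⟨x, rfl⟩ : ∃ x : Fin (m + 2), x.succ = T :=
    ⟨⟨T - 1, by omega⟩, Fin.ext (by simp; omega)⟩
  simp only [Fin.val_castSucc, Fin.val_succ] at hja hjT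
  have e₁ : δ i.castSucc ≫ σ c.succ = σ c ≫ δ i := δ_comp_σ_of_le (by simp [Fin.le_def]; omega)
  have e₂ : δ x ≫ δ i.castSucc = δ i ≫ δ x.succ :=
    (SimplexCategory.δ_comp_δ (Fin.le_def.mpr (by omega))).symm
  exact hornCorrection_face_mem hH hg hT hj e₁ e₂ hu

lemma hornCorrection_face_mem_of_gt {n : ℕ} (hH : IsSimplicialSubgroup H)
    {k : Fin (n + 2)} {g : Fin (n + 2) → G.obj (op ⦋n⦌)} (hg : IsHornModSubgroup H k g)
    {u : G.obj (op ⦋n + 1⦌)} {T j : Fin (n + 2)} (hT : T ≠ k) (hj : j ≠ k) {a : Fin (n + 1)}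
    (haj : a.val + 1 < j.val) (hTj : T.val < j.val)
    (hu : (g j)⁻¹ * G.map (δ j).op u ∈ H (op ⦋n⦌)) :
    (g j)⁻¹ * G.map (δ j).op (hornCorrection g u T a) ∈ H (op ⦋n⦌) := by
  obtain ⟨m, rfl⟩ : ∃ m, n = m + 1 := ⟨n - 1, by omega⟩
  obtain ⟨i, rfl⟩ : ∃ i : Fin (m + 2), i.succ = j :=
    ⟨⟨j - 1, by omega⟩, Fin.ext (by simp; omega)⟩
  obtain ⟨c, rfl⟩ : ∃ c : Fin (m + 1), c.castSucc = a := ⟨⟨a, by omega⟩, rfl⟩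
  obtain ⟨x, rfl⟩ : ∃ x : Fin (m + 2), x.castSucc = T := ⟨⟨T, by omega⟩, rfl⟩
  simp only [Fin.val_castSucc, Fin.val_succ] at haj hTj
  have e₁ : δ i.succ ≫ σ c.castSucc = σ c ≫ δ i := δ_comp_σ_of_gt (by simp [Fin.lt_def]; omega)
  have e₂ : δ x ≫ δ i.succ = δ i ≫ δ x.castSucc :=
    SimplexCategory.δ_comp_δ (Fin.le_def.mpr (by omega))
  exact hornCorrection_face_mem hH hg hT hj e₁ e₂ hu

lemma hornCorrection_face_mem_self {n : ℕ} (g : Fin (n + 2) → G.obj (op ⦋n⦌))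
    (u : G.obj (op ⦋n + 1⦌)) {T : Fin (n + 2)} {a : Fin (n + 1)} (hTa : δ T ≫ σ a = 𝟙 _) :
    (g T)⁻¹ * G.map (δ T).op (hornCorrection g u T a) ∈ H (op ⦋n⦌) := by
  rw [map_δ_hornCorrection_self g u hTa, inv_mul_cancel]
  exact one_mem _

lemma exists_faces_mod_of_lt {n : ℕ} (hH : IsSimplicialSubgroup H)
    {k : Fin (n + 2)} {g : Fin (n + 2) → G.obj (op ⦋n⦌)} (hg : IsHornModSubgroup H k g)
    (t : ℕ) (ht : t ≤ k.val) :
    ∃ u : G.obj (op ⦋n + 1⦌), ∀ j : Fin (n + 2), j.val < t →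
      (g j)⁻¹ * G.map (δ j).op u ∈ H (op ⦋n⦌) := by
  induction t with
  | zero => exact ⟨1, fun j hj => absurd hj j.val.not_lt_zero⟩
  | succ t ih =>
    obtain ⟨u, hu⟩ := ih (by omega)
    let a : Fin (n + 1) := ⟨t, by omega⟩
    refine ⟨hornCorrection g u a.castSucc a, fun j hj => ?_⟩
    rcases Nat.lt_succ_iff_lt_or_eq.mp hj with hjt | hjt
    · exact hornCorrection_face_mem_of_lt hH hg (Fin.ne_of_val_ne (by simp [a]; omega))
        (Fin.ne_of_val_ne (by omega)) hjt hjt (hu j hjt)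
    · obtain rfl : j = a.castSucc := Fin.ext hjt
      exact hornCorrection_face_mem_self g u δ_comp_σ_self

lemma exists_faces_mod_of_lt_or_gt {n : ℕ} (hH : IsSimplicialSubgroup H)
    {k : Fin (n + 2)} {g : Fin (n + 2) → G.obj (op ⦋n⦌)} (hg : IsHornModSubgroup H k g)
    (s : ℕ) (hs : k.val + s ≤ n + 1) :
    ∃ u : G.obj (op ⦋n + 1⦌), ∀ j : Fin (n + 2), j.val < k.val ∨ n + 1 - s < j.val →
      (g j)⁻¹ * G.map (δ j).op u ∈ H (op ⦋n⦌) := by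
  induction s with
  | zero =>
    obtain ⟨u, hu⟩ := exists_faces_mod_of_lt hH hg k.val le_rfl
    exact ⟨u, fun j hj => hu j (hj.resolve_right (by omega))⟩
  | succ s ih =>
    obtain ⟨u, hu⟩ := ih (by omega)
    let a : Fin (n + 1) := ⟨n - s, by omega⟩
    refine ⟨hornCorrection g u a.succ a, fun j hj => ?_⟩
    have hT : a.succ ≠ k := Fin.ne_of_val_ne (by simp [a]; omega)
    rcases hj with hjk | hjs
    · exact hornCorrection_face_mem_of_lt hH hg hT (Fin.ne_of_val_ne (by omega))
        (by simp [a]; omega) (by simp [a]; omega) (hu j (.inl hjk))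
    · rcases Nat.lt_or_ge (n + 1 - s) j.val with hjs' | hjs'
      · exact hornCorrection_face_mem_of_gt hH hg hT (Fin.ne_of_val_ne (by omega))
          (by simp [a]; omega) (by simp [a]; omega) (hu j (.inr hjs'))
      · obtain rfl : j = a.succ := Fin.ext (by simp [a]; omega)
        exact hornCorrection_face_mem_self g u δ_comp_σ_succ

theorem exists_horn_filler_mod {n : ℕ} (hH : IsSimplicialSubgroup H)
    {k : Fin (n + 2)} {g : Fin (n + 2) → G.obj (op ⦋n⦌)} (hg : IsHornModSubgroup H k g) :
    ∃ w : G.obj (op ⦋n + 1⦌), ∀ j : Fin (n + 2), j ≠ k →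
      (g j)⁻¹ * G.map (δ j).op w ∈ H (op ⦋n⦌) := by
  obtain ⟨w, hw⟩ := exists_faces_mod_of_lt_or_gt hH hg (n + 1 - k.val) (by omega)
  refine ⟨w, fun j hj => hw j ?_⟩
  have := Fin.val_ne_of_ne hj
  omega

end HornFillerModSubgroup

lemma SimplicialRightAction.act_injective {G : SimplexCategoryᵒᵖ ⥤ GrpCat} {X : SSet}
    {a : SimplicialRightAction G X} (hfree : a.IsFree) (n : SimplexCategoryᵒᵖ) (x : X.obj n) :
    Function.Injective (a.act n x) := by
  intro g g' h
  have hfix : a.act n (a.act n x g') (g'⁻¹ * g) = a.act n x g' := by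
    rw [a.act_mul, mul_inv_cancel_left, h]
  exact (inv_mul_eq_one.mp (hfree n _ _ hfix)).symm

lemma horn_ι_comp_yonedaEquiv_symm_app_face {S : SSet} {n : ℕ} (k j : Fin (n + 2)) (hj : j ≠ k)
    (x : S _⦋n + 1⦌) :
    ((horn (n + 1) k).ι ≫ yonedaEquiv.symm x).app _ (horn.face k j hj) = S.map (δ j).op x :=
  rfl

lemma map_app_horn_face_eq {S : SSet} {n : ℕ} {k : Fin (n + 2)} (f : (Λ[n + 1, k] : SSet) ⟶ S)
    {p : SimplexCategory} (u v : p ⟶ ⦋n⦌) {i j : Fin (n + 2)} (hi : i ≠ k) (hj : j ≠ k)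
    (h : u ≫ δ j = v ≫ δ i) :
    S.map u.op (f.app _ (horn.face k j hj)) = S.map v.op (f.app _ (horn.face k i hi)) := by
  rw [← NatTrans.naturality_apply f u.op, ← NatTrans.naturality_apply f v.op]
  congr 1
  exact Subtype.ext (congrArg stdSimplex.objEquiv.symm h)

lemma isKanFibration_of_exists_filler {Y Z : SSet} (r : Y ⟶ Z)
    (h : ∀ (n : ℕ) (k : Fin (n + 2)) (f : (Λ[n + 1, k] : SSet) ⟶ Y) (z : Z _⦋n + 1⦌),
      (∀ j (hj : j ≠ k), r.app _ (f.app _ (horn.face k j hj)) = Z.map (δ j).op z) →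
      ∃ y : Y _⦋n + 1⦌, (∀ j (hj : j ≠ k), Y.map (δ j).op y = f.app _ (horn.face k j hj)) ∧
        r.app _ y = z) :
    IsKanFibration r := by
  refine fun n k => ⟨fun {f b} sq => ?_⟩
  obtain ⟨y, hfaces, hy⟩ := h n k f (yonedaEquiv b) fun j hj => by
    rw [← horn_ι_comp_yonedaEquiv_symm_app_face, Equiv.symm_apply_apply, ← sq.w]
    rfl
  refine ⟨⟨⟨yonedaEquiv.symm y, horn.hom_ext _ _ hfaces, yonedaEquiv.injective ?_⟩⟩⟩
  rw [yonedaEquiv_comp, Equiv.apply_symm_apply, hy]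

section QuotientMaps

variable {G : SimplexCategoryᵒᵖ ⥤ GrpCat} {H : ∀ n : SimplexCategoryᵒᵖ, Subgroup (G.obj n)}
  {X Y Z : SSet} {a : SimplicialRightAction G X}

lemma exists_act_of_app_eq {qH : X ⟶ Y}
    (hqH_surj : ∀ n : SimplexCategoryᵒᵖ, Function.Surjective (qH.app n)) {qG : X ⟶ Z}
    (hqG_rel : ∀ (n : SimplexCategoryᵒᵖ) (x x' : X.obj n),
      qG.app n x = qG.app n x' ↔ ∃ g : G.obj n, x' = a.act n x g)
    {r : Y ⟶ Z} (hr : qH ≫ r = qG) {n : SimplexCategoryᵒᵖ} {x : X.obj n} {y : Y.obj n}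
    (hxy : r.app n y = qG.app n x) :
    ∃ g : G.obj n, qH.app n (a.act n x g) = y := by
  obtain ⟨x', rfl⟩ := hqH_surj n y
  obtain ⟨g, rfl⟩ := (hqG_rel n x x').mp (by rw [← hxy, ← hr]; rfl)
  exact ⟨g, rfl⟩

lemma inv_mul_mem_of_app_act_eq (hfree : a.IsFree) {qH : X ⟶ Y}
    (hqH_rel : ∀ (n : SimplexCategoryᵒᵖ) (x x' : X.obj n),
      qH.app n x = qH.app n x' ↔ ∃ g ∈ H n, x' = a.act n x g)
    {n : SimplexCategoryᵒᵖ} {x : X.obj n} {g g' : G.obj n}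
    (h : qH.app n (a.act n x g) = qH.app n (a.act n x g')) :
    g⁻¹ * g' ∈ H n := by
  obtain ⟨k, hk, hact⟩ := (hqH_rel n _ _).mp h
  rw [a.act_mul] at hact
  rwa [a.act_injective hfree n x hact, inv_mul_cancel_left]

lemma app_act_eq_of_inv_mul_mem {qH : X ⟶ Y}
    (hqH_rel : ∀ (n : SimplexCategoryᵒᵖ) (x x' : X.obj n),
      qH.app n x = qH.app n x' ↔ ∃ g ∈ H n, x' = a.act n x g)
    {n : SimplexCategoryᵒᵖ} {x : X.obj n} {g g' : G.obj n} (h : g⁻¹ * g' ∈ H n) :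
    qH.app n (a.act n x g) = qH.app n (a.act n x g') :=
  (hqH_rel n _ _).mpr ⟨_, h, by rw [a.act_mul, mul_inv_cancel_left]⟩

lemma isHornModSubgroup_of_app_act_eq (hfree : a.IsFree) {qH : X ⟶ Y}
    (hqH_rel : ∀ (n : SimplexCategoryᵒᵖ) (x x' : X.obj n),
      qH.app n x = qH.app n x' ↔ ∃ g ∈ H n, x' = a.act n x g)
    {n : ℕ} {k : Fin (n + 2)} (f : (Λ[n + 1, k] : SSet) ⟶ Y) (x : X _⦋n + 1⦌)
    (g : Fin (n + 2) → G.obj (op ⦋n⦌))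
    (hg : ∀ j (hj : j ≠ k), qH.app _ (a.act _ (X.map (δ j).op x) (g j)) =
      f.app _ (horn.face k j hj)) :
    IsHornModSubgroup H k g := by
  intro i j hi hj p u v huv
  have hface (l : Fin (n + 2)) (w : p ⟶ ⦋n⦌) :
      X.map w.op (a.act _ (X.map (δ l).op x) (g l)) =
        a.act _ (X.map (w ≫ δ l).op x) (G.map w.op (g l)) := by
    rw [a.act_map, op_comp, Functor.map_comp_apply]
  apply inv_mul_mem_of_app_act_eq hfree hqH_rel (x := X.map (u ≫ δ j).op x)
  rw [← hface, huv, ← hface, NatTrans.naturality_apply, NatTrans.naturality_apply, hg, hg]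
  exact map_app_horn_face_eq f u v hi hj huv

end QuotientMaps

/-- Let `G` be a simplicial group, `H` a simplicial subgroup of `G`, and `X` a simplicial set
with a free right `G`-action.  If `q_H : X → Y` is a quotient map for the restricted `H`-action,
`q_G : X → Z` is a quotient map for the `G`-action, and `r : Y → Z` satisfies
`r ∘ q_H = q_G`, then `r` is a Kan fibration. -/
theorem kanFibration_of_subgroup_quotient (G : SimplexCategoryᵒᵖ ⥤ GrpCat)
    (H : ∀ n : SimplexCategoryᵒᵖ, Subgroup (G.obj n))
    (hH : ∀ {m n : SimplexCategoryᵒᵖ} (α : m ⟶ n), ∀ g ∈ H m, G.map α g ∈ H n)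
    (X Y Z : SSet) (a : SimplicialRightAction G X) (hfree : a.IsFree)
    (qH : X ⟶ Y)
    (hqH_surj : ∀ n : SimplexCategoryᵒᵖ, Function.Surjective (qH.app n))
    (hqH_rel : ∀ (n : SimplexCategoryᵒᵖ) (x x' : X.obj n),
      qH.app n x = qH.app n x' ↔ ∃ g ∈ H n, x' = a.act n x g)
    (qG : X ⟶ Z)
    (hqG_surj : ∀ n : SimplexCategoryᵒᵖ, Function.Surjective (qG.app n))
    (hqG_rel : ∀ (n : SimplexCategoryᵒᵖ) (x x' : X.obj n),
      qG.app n x = qG.app n x' ↔ ∃ g : G.obj n, x' = a.act n x g)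
    (r : Y ⟶ Z) (hr : qH ≫ r = qG) : IsKanFibration r := by
  refine isKanFibration_of_exists_filler r fun n k f z hz => ?_
  obtain ⟨x, rfl⟩ := hqG_surj _ z
  have hlift (j : Fin (n + 2)) : ∃ c : G.obj (op ⦋n⦌), ∀ hj : j ≠ k,
      qH.app _ (a.act _ (X.map (δ j).op x) c) = f.app _ (horn.face k j hj) := by
    by_cases hj : j = k
    · exact ⟨1, fun hj' => (hj' hj).elim⟩
    · obtain ⟨c, hc⟩ := exists_act_of_app_eq hqH_surj hqG_rel hr
        (by rw [hz j hj, NatTrans.naturality_apply])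
      exact ⟨c, fun _ => hc⟩
  choose g hg using hlift
  obtain ⟨w, hw⟩ :=
    exists_horn_filler_mod @hH (isHornModSubgroup_of_app_act_eq hfree hqH_rel f x g hg)
  refine ⟨qH.app _ (a.act _ x w), fun j hj => ?_, ?_⟩
  · rw [← NatTrans.naturality_apply, a.act_map, ← hg j hj]
    exact (app_act_eq_of_inv_mul_mem hqH_rel (hw j hj)).symm
  · change (qH ≫ r).app _ _ = _
    rw [hr]
    exact ((hqG_rel _ x _).mpr ⟨w, rfl⟩).symm
end

section
/- Let G be a simplicial group and H a simplicial subgroup of G (a collection of subgroups Hₙ ≤ Gₙ closed under all simplicial structure maps). Regard G as a simplicial set with the free right H-action given by multiplication, and let q : G → Y be a quotient map for this action. Then q is a Kan fibration, and Y is a Kan complex. -/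
open CategoryTheory Simplicial SSet

/-- The unique morphism from a simplicial set to `Δ[0]`. -/
def SSet.toPt (X : SSet) : X ⟶ Δ[0] where
  app n := TypeCat.ofHom fun _ => SSet.stdSimplex.objMk (OrderHom.const _ 0)
  naturality m n α := by
    ext x
    apply SSet.stdSimplex.objEquiv.injective
    apply Subsingleton.elim

/-- A simplicial set `Y` is a *Kan complex* if the unique morphism `Y ⟶ Δ[0]` is a
Kan fibration. -/
def IsKanComplex (Y : SSet) : Prop :=
  IsKanFibration Y.toPt

/-!
Moore's argument: in a simplicial group, a compatible family of faces indexed by all but at least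
one of the indices `0, …, n + 1`, with values in a simplicial subgroup `K`, has a filler in `K`.
One fills the faces below a missing index in increasing order and those above it in decreasing
order; each new face `r` is set by multiplying the current filler `w` by a degenerate simplex
`σ_c ((δ_r w)⁻¹ x_r)`, whose other faces are trivial by compatibility.

For the quotient `q : G → Y`, a lift of the bottom simplex of a lifting problem has faces in the
`H`-cosets of the horn; filling the discrepancies inside `H` moves it within its coset onto the
horn. For `Y`, a horn is lifted to a compatible family in `G` one face at a time by the same coset
correction, then filled in `G` and pushed down.
-/

open Opposite

namespace SSet

/-- The faces `x i`, `i ∈ S`, fit together as faces of one `(n + 1)`-simplex would, in the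
convention of `horn.IsCompatible`; there is no condition when `n = 0`. -/
def FacesCompatible (X : SSet) {n : ℕ} (S : Set (Fin (n + 2))) (x : Fin (n + 2) → X _⦋n⦌) :
    Prop :=
  match n with
  | 0 => True
  | _ + 1 => ∀ i j (hij : i < j), i ∈ S → j ∈ S →
      X.δ (j.pred (Fin.ne_zero_of_lt hij)) (x i) = X.δ (i.castPred (Fin.ne_last_of_lt hij)) (x j)

variable {X : SSet}

lemma δ_δ_of_val_lt {n : ℕ} (x : X _⦋n + 2⦌) {a : Fin (n + 2)} {b : Fin (n + 3)}
    {a' : Fin (n + 3)} {b' : Fin (n + 2)} (hab : a.val < b.val) (ha : a'.val = a.val)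
    (hb : b'.val + 1 = b.val) : X.δ a (X.δ b x) = X.δ b' (X.δ a' x) := by
  obtain rfl : a' = a.castSucc := Fin.ext ha
  obtain rfl : b = b'.succ := Fin.ext (by simp [← hb])
  exact δ_comp_δ_apply (Fin.le_def.2 (by simp at hab; omega)) x

lemma facesCompatible_δ {n : ℕ} (S : Set (Fin (n + 2))) (w : X _⦋n + 1⦌) :
    X.FacesCompatible S (fun j ↦ X.δ j w) := by
  cases n with
  | zero => trivial
  | succ n =>
    intro i j hij _ _
    exact (δ_δ_of_val_lt w (by simpa using hij) rfl (by simp; omega)).symm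

lemma FacesCompatible.mono {n : ℕ} {S T : Set (Fin (n + 2))} {x : Fin (n + 2) → X _⦋n⦌}
    (hx : X.FacesCompatible T x) (hST : S ⊆ T) : X.FacesCompatible S x := by
  cases n with
  | zero => trivial
  | succ n => exact fun i j hij hi hj ↦ hx i j hij (hST hi) (hST hj)

lemma app_horn_face_eq_yonedaEquiv {n : ℕ} {k : Fin (n + 2)} (f : (Λ[n + 1, k] : SSet) ⟶ X)
    (j : Fin (n + 2)) (hj : j ≠ k) :
    f.app _ (horn.face k j hj) = yonedaEquiv (horn.ι k j hj ≫ f) := by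
  rw [yonedaEquiv_comp, horn.yonedaEquiv_ι]

lemma δ_pred_app_horn_face {n : ℕ} {k : Fin (n + 3)} (f : (Λ[n + 2, k] : SSet) ⟶ X)
    {i j : Fin (n + 3)} (hij : i < j) (hi : i ≠ k) (hj : j ≠ k) :
    X.δ (j.pred (Fin.ne_zero_of_lt hij)) (f.app _ (horn.face k i hi)) =
      X.δ (i.castPred (Fin.ne_last_of_lt hij)) (f.app _ (horn.face k j hj)) := by
  have := congrArg yonedaEquiv (horn.IsCompatible.of_hom f i j hi hj hij)
  simpa only [stdSimplex.yonedaEquiv_δ_comp, app_horn_face_eq_yonedaEquiv] using this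

lemma facesCompatible_horn {n : ℕ} {k : Fin (n + 2)} (f : (Λ[n + 1, k] : SSet) ⟶ X)
    {x : Fin (n + 2) → X _⦋n⦌} (hx : ∀ j (hj : j ≠ k), x j = f.app _ (horn.face k j hj)) :
    X.FacesCompatible {j | j ≠ k} x := by
  cases n with
  | zero => trivial
  | succ n =>
    intro i j hij hi hj
    rw [hx i hi, hx j hj]
    exact δ_pred_app_horn_face f hij hi hj

lemma FacesCompatible.insert_update {n : ℕ} {S : Set (Fin (n + 3))}
    {x : Fin (n + 3) → X _⦋n + 1⦌} (hx : X.FacesCompatible S x) {J : Fin (n + 3)}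
    (hSJ : ∀ i ∈ S, i < J) {y : X _⦋n + 1⦌}
    (hy : ∀ i (hi : i < J), i ∈ S →
      X.δ (J.pred (Fin.ne_zero_of_lt hi)) (x i) = X.δ (i.castPred (Fin.ne_last_of_lt hi)) y) :
    X.FacesCompatible (insert J S) (Function.update x J y) := by
  intro i j hij hi hj
  have hiS : i ∈ S := hi.resolve_left fun hiJ ↦ by
    rcases hj with rfl | hj
    · exact hij.ne hiJ
    · exact (hSJ j hj).not_gt (hiJ ▸ hij)
  rw [Function.update_of_ne (hSJ i hiS).ne]
  rcases hj with rfl | hjS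
  · rw [Function.update_self]
    exact hy i hij hiS
  · rw [Function.update_of_ne (hSJ j hjS).ne]
    exact hx i j hij hiS hjS

lemma FacesCompatible.δ_pred {n : ℕ} {S : Set (Fin (n + 3))} {x : Fin (n + 3) → X _⦋n + 1⦌}
    (hx : X.FacesCompatible S x) {J : Fin (n + 3)} (hJ : J ≠ 0) :
    X.FacesCompatible {i | i.castSucc ∈ S ∧ i.castSucc < J}
      (fun i ↦ X.δ (J.pred hJ) (x i.castSucc)) := by
  cases n with
  | zero => trivial
  | succ n =>
    intro i j hij ⟨hiS, _⟩ ⟨hjS, hjJ⟩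
    have hij' : i.castSucc < j.castSucc := Fin.castSucc_lt_castSucc_iff.2 hij
    simp only [Fin.lt_def, Fin.val_castSucc] at hij hjJ
    calc X.δ (j.pred _) (X.δ (J.pred hJ) (x i.castSucc))
        _ = X.δ ⟨J - 2, by omega⟩ (X.δ (j.castSucc.pred (Fin.ne_zero_of_lt hij'))
              (x i.castSucc)) := δ_δ_of_val_lt _ (by simp; omega) (by simp) (by simp; omega)
        _ = X.δ ⟨J - 2, by omega⟩ (X.δ (i.castSucc.castPred (Fin.ne_last_of_lt hij'))
              (x j.castSucc)) := by rw [hx _ _ hij' hiS hjS]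
        _ = X.δ (i.castPred _) (X.δ (J.pred hJ) (x j.castSucc)) :=
          (δ_δ_of_val_lt _ (by simp; omega) (by simp) (by simp; omega)).symm

lemma δ_σ_eq_self {n : ℕ} {r : Fin (n + 2)} {c : Fin (n + 1)}
    (hrc : r = c.castSucc ∨ r = c.succ) (y : X _⦋n⦌) : X.δ r (X.σ c y) = y := by
  rcases hrc with rfl | rfl
  · exact δ_comp_σ_self_apply c y
  · exact δ_comp_σ_succ_apply c y

lemma app_app_horn_face_of_commSq {n : ℕ} {k : Fin (n + 2)} {Y : SSet}
    {f : (Λ[n + 1, k] : SSet) ⟶ X} {p : X ⟶ Y} {g : Δ[n + 1] ⟶ Y}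
    (sq : CommSq f Λ[n + 1, k].ι p g) (j : Fin (n + 2)) (hj : j ≠ k) :
    p.app _ (f.app _ (horn.face k j hj)) = Y.δ j (yonedaEquiv g) := by
  rw [app_horn_face_eq_yonedaEquiv, ← yonedaEquiv_comp, Category.assoc, sq.w, ← Category.assoc,
    horn.ι_ι, stdSimplex.yonedaEquiv_δ_comp]

lemma hasLiftingProperty_horn_ι_of_exists {Y : SSet} (p : X ⟶ Y) {n : ℕ} (k : Fin (n + 2))
    (h : ∀ (f : (Λ[n + 1, k] : SSet) ⟶ X) (z : Y _⦋n + 1⦌),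
      (∀ j (hj : j ≠ k), p.app _ (f.app _ (horn.face k j hj)) = Y.δ j z) →
      ∃ w, (∀ j (hj : j ≠ k), X.δ j w = f.app _ (horn.face k j hj)) ∧ p.app _ w = z) :
    HasLiftingProperty Λ[n + 1, k].ι p := by
  refine ⟨fun {f g} sq ↦ ?_⟩
  obtain ⟨w, hwf, hwp⟩ := h f (yonedaEquiv g) (app_app_horn_face_of_commSq sq)
  refine ⟨⟨{ l := yonedaEquiv.symm w, fac_left := ?_, fac_right := ?_ }⟩⟩
  · refine horn.hom_ext _ _ fun j hj ↦ ?_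
    rw [← hwf j hj]
    rfl
  · rw [yonedaEquiv_symm_comp, hwp, Equiv.symm_apply_apply]

end SSet

namespace SimplicialGroup

abbrev toSSet (G : SimplexCategoryᵒᵖ ⥤ GrpCat) : SSet := G ⋙ forget GrpCat

def IsSimplicialSubgroup {G : SimplexCategoryᵒᵖ ⥤ GrpCat} (K : ∀ n, Subgroup (G.obj n)) :
    Prop :=
  ∀ {m n : SimplexCategoryᵒᵖ} (α : m ⟶ n), ∀ g ∈ K m, G.map α g ∈ K n

variable {G : SimplexCategoryᵒᵖ ⥤ GrpCat}

section Faces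

variable {n : ℕ}

@[simp] lemma δ_mul (i : Fin (n + 2)) (a b : G.obj (op ⦋n + 1⦌)) :
    (toSSet G).δ i (a * b) = (toSSet G).δ i a * (toSSet G).δ i b := map_mul (G.map _).hom a b

@[simp] lemma δ_inv (i : Fin (n + 2)) (a : G.obj (op ⦋n + 1⦌)) :
    (toSSet G).δ i a⁻¹ = ((toSSet G).δ i a)⁻¹ := map_inv (G.map _).hom a

@[simp] lemma δ_one (i : Fin (n + 2)) : (toSSet G).δ i (1 : G.obj (op ⦋n + 1⦌)) = 1 :=
  map_one (G.map _).hom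

@[simp] lemma σ_one (i : Fin (n + 1)) : (toSSet G).σ i (1 : G.obj (op ⦋n⦌)) = 1 :=
  map_one (G.map _).hom

lemma _root_.SSet.FacesCompatible.mul {S : Set (Fin (n + 2))}
    {x y : Fin (n + 2) → G.obj (op ⦋n⦌)}
    (hx : (toSSet G).FacesCompatible S x) (hy : (toSSet G).FacesCompatible S y) :
    (toSSet G).FacesCompatible S (fun j ↦ x j * y j) := by
  cases n with
  | zero => trivial
  | succ n =>
    intro i j hij hi hj
    simp only [δ_mul, hx i j hij hi hj, hy i j hij hi hj]

lemma _root_.SSet.FacesCompatible.inv {S : Set (Fin (n + 2))}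
    {x : Fin (n + 2) → G.obj (op ⦋n⦌)} (hx : (toSSet G).FacesCompatible S x) :
    (toSSet G).FacesCompatible S (fun j ↦ (x j)⁻¹) := by
  cases n with
  | zero => trivial
  | succ n =>
    intro i j hij hi hj
    simp only [δ_inv, hx i j hij hi hj]

end Faces

section Moore

variable (K : ∀ n, Subgroup (G.obj n))

def FillableOn {n : ℕ} (D : Set (Fin (n + 2))) (x : Fin (n + 2) → G.obj (op ⦋n⦌)) : Prop :=
  ∃ w ∈ K (op ⦋n + 1⦌), ∀ j ∈ D, (toSSet G).δ j w = x j

variable {K}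

lemma FillableOn.mono {n : ℕ} {D D' : Set (Fin (n + 2))} {x : Fin (n + 2) → G.obj (op ⦋n⦌)}
    (hx : FillableOn K D x) (hD : D' ⊆ D) : FillableOn K D' x :=
  let ⟨w, hwK, hw⟩ := hx
  ⟨w, hwK, fun j hj ↦ hw j (hD hj)⟩

lemma δ_σ_eq_one {n : ℕ} {S : Set (Fin (n + 3))} {e : Fin (n + 3) → G.obj (op ⦋n + 1⦌)}
    (he : (toSSet G).FacesCompatible S e) {j r : Fin (n + 3)} (hj : j ∈ S) (hr : r ∈ S)
    (hej : e j = 1) {c : Fin (n + 2)} (hrc : r = c.castSucc ∨ r = c.succ)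
    (hjc : j ≠ c.castSucc) (hjc' : j ≠ c.succ) :
    (toSSet G).δ j ((toSSet G).σ c (e r)) = 1 := by
  rcases lt_or_gt_of_ne hjc with hlt | hgt
  · have hc : c ≠ 0 := by rintro rfl; exact Fin.not_lt_zero _ hlt
    have hjr : j < r := by rcases hrc with rfl | rfl <;> simp [Fin.lt_def] at hlt ⊢ <;> omega
    have key := δ_comp_σ_of_le_apply (S := toSSet G) (i := j.castPred (Fin.ne_last_of_lt hjr))
      (j := c.pred hc) (by simp [Fin.le_def, Fin.lt_def] at hlt ⊢; omega) (e r)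
    rw [Fin.castSucc_castPred, Fin.succ_pred] at key
    rw [key, ← he j r hjr hj hr, hej, δ_one, σ_one]
  · have hgt' : c.succ < j :=
      lt_of_le_of_ne (by simpa [Fin.le_def, Fin.lt_def] using hgt) hjc'.symm
    have hrj : r < j := by rcases hrc with rfl | rfl <;> simp [Fin.lt_def] at hgt' ⊢ <;> omega
    rw [δ_comp_σ_of_gt'_apply hgt', he r j hrj hr hj, hej, δ_one, σ_one]

lemma FillableOn.insert (hK : IsSimplicialSubgroup K) {n : ℕ} {S D : Set (Fin (n + 3))}
    {x : Fin (n + 3) → G.obj (op ⦋n + 1⦌)} (hx : (toSSet G).FacesCompatible S x)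
    (hxK : ∀ j ∈ S, x j ∈ K _) (hD : FillableOn K D x) {r : Fin (n + 3)}
    {c : Fin (n + 2)} (hrc : r = c.castSucc ∨ r = c.succ) (hcD : c.castSucc ∉ D)
    (hcD' : c.succ ∉ D) : FillableOn K (S ∩ insert r D) x := by
  by_cases hr : r ∈ S
  · obtain ⟨w, hwK, hw⟩ := hD
    let e j := ((toSSet G).δ j w)⁻¹ * x j
    have he : (toSSet G).FacesCompatible S e :=
      (facesCompatible_δ (X := toSSet G) S w).inv.mul hx
    refine ⟨w * (toSSet G).σ c (e r),
      mul_mem hwK (hK _ _ (mul_mem (inv_mem (hK _ _ hwK)) (hxK r hr))), ?_⟩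
    rintro j ⟨hjS, rfl | hjD⟩
    · rw [δ_mul, δ_σ_eq_self hrc, mul_inv_cancel_left]
    · have hc : j ≠ c.castSucc := by rintro rfl; exact hcD hjD
      have hc' : j ≠ c.succ := by rintro rfl; exact hcD' hjD
      rw [δ_mul, δ_σ_eq_one he hjS hr (by simp [e, hw j hjD]) hrc hc hc', mul_one, hw j hjD]
  · exact hD.mono fun j ⟨hjS, hj⟩ ↦ hj.resolve_left (by rintro rfl; exact hr hjS)

theorem fillableOn_of_facesCompatible_succ (hK : IsSimplicialSubgroup K) {n : ℕ}
    {S : Set (Fin (n + 3))} {p : Fin (n + 3)} (hp : p ∉ S)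
    {x : Fin (n + 3) → G.obj (op ⦋n + 1⦌)}
    (hx : (toSSet G).FacesCompatible S x) (hxK : ∀ j ∈ S, x j ∈ K _) : FillableOn K S x := by
  -- faces of index `< a` are filled for increasing `a`, those of index `> b` for decreasing `b`
  have key : ∀ t a b, a ≤ p.val → p.val ≤ b → b ≤ n + 2 → a + (n + 2 - b) = t →
      FillableOn K (S ∩ {j | j.val < a ∨ b < j.val}) x := by
    intro t
    induction t with
    | zero =>
      refine fun a b _ _ hb ht ↦ ⟨1, one_mem _, fun j hj ↦ absurd hj.2 ?_⟩
      change ¬ (j.val < a ∨ b < j.val)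
      omega
    | succ t ih =>
      intro a b hap hpb hb ht
      rcases a with _ | a
      · refine (FillableOn.insert hK hx hxK
          (ih 0 (b + 1) (Nat.zero_le _) (by omega) (by omega) (by omega))
          (c := ⟨b, by omega⟩) (Or.inr rfl) ?_ ?_).mono ?_ <;>
        grind [Fin.ext_iff]
      · refine (FillableOn.insert hK hx hxK (ih a b (by omega) hpb hb (by omega))
          (c := ⟨a, by omega⟩) (Or.inl rfl) ?_ ?_).mono ?_ <;>
        grind [Fin.ext_iff]
  refine (key _ p.val p.val le_rfl le_rfl (by omega) rfl).mono fun j hj ↦ ⟨hj, ?_⟩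
  have : j.val ≠ p.val := fun h ↦ hp (Fin.ext h ▸ hj)
  change j.val < p.val ∨ p.val < j.val
  omega

theorem fillableOn_of_facesCompatible (hK : IsSimplicialSubgroup K) {n : ℕ}
    {S : Set (Fin (n + 2))} {p : Fin (n + 2)} (hp : p ∉ S)
    {x : Fin (n + 2) → G.obj (op ⦋n⦌)}
    (hx : (toSSet G).FacesCompatible S x) (hxK : ∀ j ∈ S, x j ∈ K _) : FillableOn K S x := by
  cases n with
  | zero =>
    have hS : ∀ j ∈ S, j = p.rev := fun j hj ↦ by
      have : j ≠ p := by rintro rfl; exact hp hj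
      simp [Fin.ext_iff, Fin.val_rev] at this ⊢
      omega
    by_cases h : p.rev ∈ S
    · refine ⟨(toSSet G).σ 0 (x p.rev), hK _ _ (hxK _ h), fun j hj ↦ ?_⟩
      obtain rfl := hS j hj
      exact δ_σ_eq_self (by simp [Fin.ext_iff]; omega) _
    · exact ⟨1, one_mem _, fun j hj ↦ absurd (hS j hj ▸ hj) h⟩
  | succ n => exact fillableOn_of_facesCompatible_succ hK hp hx hxK

theorem exists_δ_mul_eq_of_inv_mul_mem (hK : IsSimplicialSubgroup K) {n : ℕ}
    {S : Set (Fin (n + 2))} {p : Fin (n + 2)} (hp : p ∉ S)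
    {y : Fin (n + 2) → G.obj (op ⦋n⦌)}
    (hy : (toSSet G).FacesCompatible S y) (g : G.obj (op ⦋n + 1⦌))
    (hgy : ∀ j ∈ S, ((toSSet G).δ j g)⁻¹ * y j ∈ K _) :
    ∃ η ∈ K _, ∀ j ∈ S, (toSSet G).δ j (g * η) = y j := by
  obtain ⟨η, hηK, hη⟩ := fillableOn_of_facesCompatible hK hp
    ((facesCompatible_δ (X := toSSet G) S g).inv.mul hy) hgy
  exact ⟨η, hηK, fun j hj ↦ by rw [δ_mul, hη j hj, mul_inv_cancel_left]⟩

end Moore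

section Quotient

variable {H : ∀ n, Subgroup (G.obj n)} {Y : SSet} {q : toSSet G ⟶ Y}
  (hrel : ∀ (n : SimplexCategoryᵒᵖ) (x x' : G.obj n),
    q.app n x = q.app n x' ↔ ∃ h ∈ H n, x' = x * h)
include hrel

lemma app_eq_app_iff_inv_mul_mem {n : SimplexCategoryᵒᵖ} (a b : G.obj n) :
    q.app n a = q.app n b ↔ a⁻¹ * b ∈ H n := by
  rw [hrel]
  exact ⟨fun ⟨h, hh, hb⟩ ↦ by simpa [hb] using hh, fun h ↦ ⟨_, h, by simp⟩⟩

lemma app_mul_of_mem {n : SimplexCategoryᵒᵖ} (a : G.obj n) {h : G.obj n} (hh : h ∈ H n) :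
    q.app n (a * h) = q.app n a :=
  ((app_eq_app_iff_inv_mul_mem hrel _ _).2 (by simpa)).symm

variable (hH : IsSimplicialSubgroup H) (hsurj : ∀ n, Function.Surjective (q.app n))
include hH hsurj

theorem isKanFibration_of_isQuotient : IsKanFibration q := by
  intro n k
  refine hasLiftingProperty_horn_ι_of_exists q k fun f z hfz ↦ ?_
  obtain ⟨g, rfl⟩ := hsurj _ z
  let y j : G.obj (op ⦋n⦌) := if hj : j = k then 1 else f.app _ (horn.face k j hj)
  have hy : (toSSet G).FacesCompatible {j | j ≠ k} y :=
    facesCompatible_horn f fun j hj ↦ dif_neg hj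
  obtain ⟨η, hηH, hη⟩ := exists_δ_mul_eq_of_inv_mul_mem hH (p := k) (by simp) hy g
    fun j hj ↦ by
      rw [← app_eq_app_iff_inv_mul_mem hrel, δ_naturality_apply, ← hfz j hj]
      simp only [y, dif_neg (show j ≠ k from hj)]
  exact ⟨g * η, fun j hj ↦ by simpa [y, hj] using hη j hj, app_mul_of_mem hrel g hηH⟩

lemma exists_lift_δ_eq {m : ℕ} {k : Fin (m + 3)} (f : (Λ[m + 2, k] : SSet) ⟶ Y)
    {J : Fin (m + 3)} (hJk : J ≠ k) {v : Fin (m + 3) → G.obj (op ⦋m + 1⦌)}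
    (hv : (toSSet G).FacesCompatible {j | j ≠ k ∧ j < J} v)
    (hvq : ∀ j (hj : j ≠ k), j < J → q.app _ (v j) = f.app _ (horn.face k j hj)) :
    ∃ g, q.app _ g = f.app _ (horn.face k J hJk) ∧
      ∀ i (hi : i < J), i ∈ {j | j ≠ k ∧ j < J} →
      (toSSet G).δ (J.pred (Fin.ne_zero_of_lt hi)) (v i) =
        (toSSet G).δ (i.castPred (Fin.ne_last_of_lt hi)) g := by
  obtain ⟨g₀, hg₀⟩ := hsurj _ (f.app _ (horn.face k J hJk))
  by_cases hJ : J = 0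
  · exact ⟨g₀, hg₀, fun i hi ↦ absurd hi (hJ ▸ Fin.not_lt_zero i)⟩
  obtain ⟨p, hp⟩ :
      ∃ p : Fin (m + 2), ¬ (p.castSucc ∈ {j | j ≠ k ∧ j < J} ∧ p.castSucc < J) := by
    by_cases hJl : J = Fin.last _
    · refine ⟨k.castPred (fun hk ↦ hJk (hJl.trans hk.symm)), fun h ↦ ?_⟩
      simp at h
    · exact ⟨J.castPred hJl, fun h ↦ by simp at h⟩
  obtain ⟨η, hηH, hη⟩ := exists_δ_mul_eq_of_inv_mul_mem hH hp (hv.δ_pred hJ) g₀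
    fun i ⟨⟨hik, hiJ⟩, _⟩ ↦ by
      rw [← app_eq_app_iff_inv_mul_mem hrel, δ_naturality_apply, δ_naturality_apply, hg₀,
        hvq _ hik hiJ, δ_pred_app_horn_face f hiJ hik hJk, Fin.castPred_castSucc]
  refine ⟨g₀ * η, (app_mul_of_mem hrel g₀ hηH).trans hg₀, fun i hi hiS ↦ ?_⟩
  have := hη (i.castPred (Fin.ne_last_of_lt hi)) ⟨by simpa using hiS, by simpa using hi⟩
  simpa using this.symm

lemma exists_facesCompatible_lift {n : ℕ} {k : Fin (n + 2)} (f : (Λ[n + 1, k] : SSet) ⟶ Y) :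
    ∃ v : Fin (n + 2) → G.obj (op ⦋n⦌), (toSSet G).FacesCompatible {j | j ≠ k} v ∧
      ∀ j (hj : j ≠ k), q.app _ (v j) = f.app _ (horn.face k j hj) := by
  cases n with
  | zero =>
    have h (j : Fin 2) : ∃ g : G.obj (op ⦋0⦌), ∀ hj : j ≠ k,
        q.app _ g = f.app _ (horn.face k j hj) := by
      by_cases hj : j = k
      · exact ⟨1, fun h ↦ absurd hj h⟩
      · obtain ⟨g, hg⟩ := hsurj _ (f.app _ (horn.face k j hj))
        exact ⟨g, fun _ ↦ hg⟩
    choose v hv using h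
    exact ⟨v, trivial, hv⟩
  | succ m =>
    have key (J : ℕ) : ∃ v : Fin (m + 3) → G.obj (op ⦋m + 1⦌),
        (toSSet G).FacesCompatible {j | j ≠ k ∧ j.val < J} v ∧
          ∀ j (hj : j ≠ k), j.val < J → q.app _ (v j) = f.app _ (horn.face k j hj) := by
      induction J with
      | zero => exact ⟨1, fun i _ _ hi ↦ absurd hi.2 (Nat.not_lt_zero _),
          fun j _ h ↦ absurd h (Nat.not_lt_zero _)⟩
      | succ J ih =>
        obtain ⟨v, hv, hvq⟩ := ih
        by_cases hJ : ∃ J' : Fin (m + 3), J'.val = J ∧ J' ≠ k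
        · obtain ⟨J, rfl, hJk⟩ := hJ
          obtain ⟨g, hgq, hg⟩ := exists_lift_δ_eq hrel hH hsurj f hJk hv hvq
          refine ⟨Function.update v J g, (hv.insert_update (fun i hi ↦ hi.2) hg).mono ?_,
            fun j hj hjJ ↦ ?_⟩
          · rintro j ⟨hjk, hjJ⟩
            rcases Nat.lt_succ_iff_lt_or_eq.1 hjJ with h | h
            · exact Or.inr ⟨hjk, h⟩
            · exact Or.inl (Fin.ext h)
          · rcases eq_or_ne j J with rfl | hne
            · simpa using hgq
            · rw [Function.update_of_ne hne]
              exact hvq j hj (by have := Fin.val_ne_of_ne hne; omega)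
        · have hlt {j : Fin (m + 3)} (hjk : j ≠ k) (hjJ : j.val < J + 1) : j.val < J :=
            lt_of_le_of_ne (Nat.lt_succ_iff.1 hjJ) fun h ↦ hJ ⟨j, h, hjk⟩
          exact ⟨v, hv.mono fun j ⟨hjk, hjJ⟩ ↦ ⟨hjk, hlt hjk hjJ⟩,
            fun j hj hjJ ↦ hvq j hj (hlt hj hjJ)⟩
    obtain ⟨v, hv, hvq⟩ := key (m + 3)
    exact ⟨v, hv.mono fun j hj ↦ ⟨hj, j.isLt⟩, fun j hj ↦ hvq j hj j.isLt⟩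

theorem isKanComplex_of_isQuotient : IsKanComplex Y := by
  intro n k
  refine hasLiftingProperty_horn_ι_of_exists Y.toPt k fun f _ _ ↦ ?_
  obtain ⟨v, hv, hvq⟩ := exists_facesCompatible_lift hrel hH hsurj f
  obtain ⟨w, -, hw⟩ :=
    fillableOn_of_facesCompatible (K := fun _ ↦ ⊤) (fun _ _ _ ↦ trivial)
    (p := k) (by simp) hv fun _ _ ↦ trivial
  refine ⟨q.app _ w, fun j hj ↦ ?_, ?_⟩
  · rw [← δ_naturality_apply, hw j hj, hvq j hj]
  · apply stdSimplex.objEquiv.injective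
    apply Subsingleton.elim

end Quotient

end SimplicialGroup

/-- Let `G` be a simplicial group, `H` a simplicial subgroup, and regard `G` as a simplicial
set equipped with the free right `H`-action given by multiplication.  If `q : G → Y` is a
quotient map for this action, then `q` is a Kan fibration and `Y` is a Kan complex. -/
theorem kanFibration_quotient_by_subgroup (G : SimplexCategoryᵒᵖ ⥤ GrpCat)
    (H : ∀ n : SimplexCategoryᵒᵖ, Subgroup (G.obj n))
    (hH : ∀ {m n : SimplexCategoryᵒᵖ} (α : m ⟶ n), ∀ g ∈ H m, G.map α g ∈ H n)
    (Y : SSet) (q : (G ⋙ forget GrpCat) ⟶ Y)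
    (hsurj : ∀ n : SimplexCategoryᵒᵖ, Function.Surjective (q.app n))
    (hrel : ∀ (n : SimplexCategoryᵒᵖ) (x x' : G.obj n),
      q.app n x = q.app n x' ↔ ∃ h ∈ H n, x' = x * h) :
    IsKanFibration q ∧ IsKanComplex Y :=
  ⟨SimplicialGroup.isKanFibration_of_isQuotient hrel hH hsurj,
    SimplicialGroup.isKanComplex_of_isQuotient hrel hH hsurj⟩
end

section
/- Let R be a commutative ring and (M, φ) an inner product space over R. Then the map p ↦ range(p) is a bijection from the set of R-linear endomorphisms p of M satisfying p ∘ p = p and φ(p x, y) = φ(x, p y) for all x, y ∈ M, onto the set of submodules N ≤ M to which φ restricts nondegenerately. -/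
/-- A symmetric bilinear form `φ` on `M` *restricts nondegenerately* to a submodule `N ≤ M`
if the map `N → Hom_R(N, R)`, `n ↦ φ(−, n)|_N`, is bijective. -/
def RestrictsNondeg {R M : Type*} [CommRing R] [AddCommGroup M] [Module R M]
    (φ : M →ₗ[R] M →ₗ[R] R) (N : Submodule R M) : Prop :=
  Function.Bijective fun n : N => (φ.flip (n : M)).domRestrict N

/-! A self-adjoint idempotent `p` with range `N` is the `φ`-orthogonal projection onto `N`: it
sends `m` to the unique `n ∈ N` with `φ(x, n) = φ(x, m)` for all `x ∈ N`, so it is determined by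
`N`. Nondegeneracy of `φ` on `M` passes to `range p`, since a functional `f` on `range p` is
represented by `p m` when `m` represents `f ∘ p`. Conversely, nondegeneracy on `N` is exactly
what defines the projection onto `N`, and symmetry of `φ` makes it self-adjoint. -/

open LinearMap

section Semiring

variable {R M P : Type*} [CommSemiring R] [AddCommMonoid M] [Module R M] [AddCommMonoid P]
  [Module R P] {φ : M →ₗ[R] M →ₗ[R] P}

theorem LinearMap.IsSelfAdjoint.eq_of_range_eq (hφ : Function.Injective φ.flip)
    {p q : Module.End R M} (hp : IsIdempotentElem p) (hq : IsIdempotentElem q)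
    (hpφ : φ.IsSelfAdjoint p) (hqφ : φ.IsSelfAdjoint q) (h : range p = range q) : p = q := by
  have hqp : ∀ y, q (p y) = p y := fun y => hq.mem_range_iff.1 (h ▸ mem_range_self p y)
  have hpq : ∀ x, p (q x) = q x := fun x => hp.mem_range_iff.1 (h ▸ mem_range_self q x)
  ext y
  refine hφ (LinearMap.ext fun x => ?_)
  calc φ x (p y) = φ x (q (p y)) := by rw [hqp]
    _ = φ (p (q x)) y := by rw [← hqφ, hpφ]
    _ = φ x (q y) := by rw [hpq, hqφ]

end Semiring

section Ring

variable {R M : Type*} [CommRing R] [AddCommGroup M] [Module R M] {φ : M →ₗ[R] M →ₗ[R] R}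

theorem restrictsNondeg_range (hφ : Function.Bijective φ.flip) {p : Module.End R M}
    (hp : IsIdempotentElem p) (hpφ : φ.IsSelfAdjoint p) : RestrictsNondeg φ (range p) := by
  have fixed : ∀ n : range p, p n = n := fun n => hp.mem_range_iff.1 n.2
  constructor
  · intro n₁ n₂ h
    refine Subtype.ext (hφ.injective (LinearMap.ext fun m => ?_))
    calc φ m n₁ = φ (p m) n₁ := by rw [hpφ, fixed]
      _ = φ (p m) n₂ := LinearMap.congr_fun h (p.rangeRestrict m)
      _ = φ m n₂ := by rw [hpφ, fixed]
  · intro f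
    obtain ⟨m, hm⟩ := hφ.surjective (f ∘ₗ p.rangeRestrict)
    refine ⟨p.rangeRestrict m, LinearMap.ext fun x => ?_⟩
    calc φ x (p m) = φ x m := by rw [← hpφ, fixed]
      _ = f (p.rangeRestrict x) := LinearMap.congr_fun hm x
      _ = f x := congrArg f (Subtype.ext (fixed x))

namespace RestrictsNondeg

variable {N : Submodule R M} (h : RestrictsNondeg φ N)

noncomputable def proj : Module.End R M :=
  N.subtype ∘ₗ (LinearEquiv.ofBijective (φ.flip.compl₁₂ N.subtype N.subtype) h).symm.toLinearMap ∘ₗ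
    φ.flip.compl₂ N.subtype

theorem proj_mem (m : M) : h.proj m ∈ N :=
  Subtype.property _

theorem apply_proj {x : M} (hx : x ∈ N) (m : M) : φ x (h.proj m) = φ x m :=
  LinearMap.congr_fun
    ((LinearEquiv.ofBijective (φ.flip.compl₁₂ N.subtype N.subtype) h).apply_symm_apply
      (φ.flip.compl₂ N.subtype m)) ⟨x, hx⟩

theorem proj_eq_self {m : M} (hm : m ∈ N) : h.proj m = m :=
  congrArg Subtype.val (h.injective (a₁ := ⟨_, h.proj_mem m⟩) (a₂ := ⟨m, hm⟩)
    (LinearMap.ext fun x => h.apply_proj x.2 m))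

theorem range_proj : range h.proj = N :=
  le_antisymm (by rintro _ ⟨m, rfl⟩; exact h.proj_mem m) fun m hm => ⟨m, h.proj_eq_self hm⟩

theorem isIdempotentElem_proj : IsIdempotentElem h.proj :=
  LinearMap.ext fun m => h.proj_eq_self (h.proj_mem m)

theorem isSelfAdjoint_proj (hsymm : ∀ x y : M, φ x y = φ y x) : φ.IsSelfAdjoint h.proj := by
  intro x y
  calc φ (h.proj x) y = φ (h.proj x) (h.proj y) := (h.apply_proj (h.proj_mem x) y).symm
    _ = φ (h.proj y) (h.proj x) := hsymm _ _
    _ = φ x (h.proj y) := by rw [h.apply_proj (h.proj_mem y), hsymm]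

end RestrictsNondeg

end Ring

theorem bijOn_range_of_selfAdjoint_idempotents_general {R M : Type*} [CommRing R] [AddCommGroup M]
    [Module R M]
    (φ : M →ₗ[R] M →ₗ[R] R) (hsymm : ∀ x y : M, φ x y = φ y x)
    (hnd : Function.Bijective fun m : M => φ.flip m) :
    Set.BijOn (fun p : Module.End R M => LinearMap.range p)
      {p : Module.End R M | p ∘ₗ p = p ∧ ∀ x y : M, φ (p x) y = φ x (p y)}
      {N : Submodule R M | RestrictsNondeg φ N} := by
  refine ⟨fun p hp => restrictsNondeg_range hnd hp.1 hp.2,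
    fun p hp q hq h => LinearMap.IsSelfAdjoint.eq_of_range_eq hnd.injective hp.1 hq.1 hp.2 hq.2 h,
    fun N hN => ⟨hN.proj, ⟨hN.isIdempotentElem_proj, hN.isSelfAdjoint_proj hsymm⟩, hN.range_proj⟩⟩

/-- Let `(M, φ)` be an inner product space over a commutative ring `R`.  The assignment
`p ↦ range p` is a bijection from the set of `R`-linear endomorphisms `p` of `M` with
`p ∘ p = p` and `φ(p x, y) = φ(x, p y)` onto the set of submodules of `M` to which `φ`
restricts nondegenerately. -/
theorem bijOn_range_of_selfAdjoint_idempotents {R M : Type*} [CommRing R] [AddCommGroup M]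
    [Module R M] [Module.Finite R M] [Module.Projective R M]
    (φ : M →ₗ[R] M →ₗ[R] R) (hsymm : ∀ x y : M, φ x y = φ y x)
    (hnd : Function.Bijective fun m : M => φ.flip m) :
    Set.BijOn (fun p : Module.End R M => LinearMap.range p)
      {p : Module.End R M | p ∘ₗ p = p ∧ ∀ x y : M, φ (p x) y = φ x (p y)}
      {N : Submodule R M | RestrictsNondeg φ N} :=
  bijOn_range_of_selfAdjoint_idempotents_general φ hsymm hnd
end

section
/- Let R be a commutative ring and (M, φ) an inner product space over R. If p is an R-linear endomorphism of M with p ∘ p = p and φ(p x, y) = φ(x, p y) for all x, y ∈ M, then φ restricts nondegenerately to the submodule range(p). -/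
/-! A projection `p` onto `N` that is self-adjoint for `φ` satisfies `φ(c, n) = φ(p c, n)` for
`n ∈ N`, so a functional `φ(−, n)` on `M` is determined by its restriction to `N`; this gives
injectivity. Conversely a functional `f` on `N` extends to `f ∘ p` on `M`, which is `φ(−, m)` for
some `m`, and then `p m ∈ N` represents `f`. -/

namespace RestrictsNondeg

variable {R M : Type*} [CommRing R] [AddCommGroup M] [Module R M]
  {φ : M →ₗ[R] M →ₗ[R] R} {N : Submodule R M} {p : Module.End R M}

lemma apply_proj_left (hp : LinearMap.IsProj N p) (hadj : ∀ x y : M, φ (p x) y = φ x (p y))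
    (c : M) {n : M} (hn : n ∈ N) : φ (p c) n = φ c n := by
  rw [hadj, hp.map_id n hn]

lemma injective_of_isProj (hp : LinearMap.IsProj N p) (hadj : ∀ x y : M, φ (p x) y = φ x (p y))
    (hinj : Function.Injective φ.flip) :
    Function.Injective fun n : N => (φ.flip (n : M)).domRestrict N := by
  rintro ⟨a, ha⟩ ⟨b, hb⟩ hab
  refine Subtype.ext (hinj (LinearMap.ext fun c => ?_))
  have hpc := LinearMap.congr_fun hab ⟨p c, hp.map_mem c⟩
  calc φ c a = φ (p c) a := (apply_proj_left hp hadj c ha).symm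
    _ = φ (p c) b := hpc
    _ = φ c b := apply_proj_left hp hadj c hb

lemma surjective_of_isProj (hp : LinearMap.IsProj N p) (hadj : ∀ x y : M, φ (p x) y = φ x (p y))
    (hsurj : Function.Surjective φ.flip) :
    Function.Surjective fun n : N => (φ.flip (n : M)).domRestrict N := by
  intro f
  obtain ⟨m, hm⟩ := hsurj (f ∘ₗ hp.codRestrict)
  refine ⟨⟨p m, hp.map_mem m⟩, LinearMap.ext fun ⟨x, hx⟩ => ?_⟩
  calc φ x (p m) = φ (p x) m := (hadj x m).symm
    _ = φ x m := by rw [hp.map_id x hx]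
    _ = f (hp.codRestrict x) := LinearMap.congr_fun hm x
    _ = f ⟨x, hx⟩ := by rw [hp.codRestrict_apply_cod ⟨x, hx⟩]

theorem of_isProj (hp : LinearMap.IsProj N p) (hadj : ∀ x y : M, φ (p x) y = φ x (p y))
    (hnd : Function.Bijective φ.flip) : RestrictsNondeg φ N :=
  ⟨injective_of_isProj hp hadj hnd.1, surjective_of_isProj hp hadj hnd.2⟩

end RestrictsNondeg

theorem restrictsNondeg_range_of_selfAdjoint_idempotent_general {R M : Type*} [CommRing R]
    [AddCommGroup M] [Module R M]
    (φ : M →ₗ[R] M →ₗ[R] R)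
    (hnd : Function.Bijective fun m : M => φ.flip m)
    (p : Module.End R M) (hp : p ∘ₗ p = p)
    (hadj : ∀ x y : M, φ (p x) y = φ x (p y)) :
    RestrictsNondeg φ (LinearMap.range p) :=
  RestrictsNondeg.of_isProj (LinearMap.IsIdempotentElem.isProj_range p hp) hadj hnd

/-- Let `(M, φ)` be an inner product space over a commutative ring `R`.  If `p` is an `R`-linear
endomorphism of `M` with `p ∘ p = p` and `φ(p x, y) = φ(x, p y)` for all `x, y`, then `φ`
restricts nondegenerately to the submodule `range p`. -/
theorem restrictsNondeg_range_of_selfAdjoint_idempotent {R M : Type*} [CommRing R]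
    [AddCommGroup M] [Module R M] [Module.Finite R M] [Module.Projective R M]
    (φ : M →ₗ[R] M →ₗ[R] R) (hsymm : ∀ x y : M, φ x y = φ y x)
    (hnd : Function.Bijective fun m : M => φ.flip m)
    (p : Module.End R M) (hp : p ∘ₗ p = p)
    (hadj : ∀ x y : M, φ (p x) y = φ x (p y)) :
    RestrictsNondeg φ (LinearMap.range p) :=
  restrictsNondeg_range_of_selfAdjoint_idempotent_general φ hnd p hp hadj
end

section
/- Let R be a local ring in which 2 is a unit and in which every unit is a square. Let M be a finite free R-module and φ a nondegenerate symmetric bilinear form on M. Then M admits an orthonormal basis for φ, i.e. a basis (e₁, …, eₙ) with φ(eᵢ, eⱼ) = 1 if i = j and φ(eᵢ, eⱼ) = 0 if i ≠ j. Consequently, two finite free R-modules with nondegenerate symmetric bilinear forms are isometric if and only if they have the same rank. -/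
/-!
Over a local ring in which `2` is a unit, a symmetric form whose adjoint is surjective takes a
unit value `φ x y`, and then by polarization `2 φ x y = φ (x + y) (x + y) - φ x x - φ y y` also a
unit value `φ x x`. Rescaling `x` by the inverse of a square root of `φ x x` gives `e` with
`φ e e = 1`, and `M` splits as `R e ⊕ e^⊥`. The orthogonal complement is a direct summand, hence
finite projective, hence free over the local ring `R`; the form stays perfect on it, and induction
on the rank produces an orthonormal basis. Two orthonormal bases of the same size then match up
into an isometry.
-/

open Module

namespace LinearMap

variable {R M : Type*} [CommRing R] [AddCommGroup M] [Module R M]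

def projKerOfApplyEqOne (f : M →ₗ[R] R) {e : M} (he : f e = 1) : M →ₗ[R] ker f :=
  (id - f.smulRight e).codRestrict (ker f) fun m => by simp [he]

section projKerOfApplyEqOne

variable (f : M →ₗ[R] R) {e : M}

theorem coe_projKerOfApplyEqOne_apply (he : f e = 1) (m : M) :
    (projKerOfApplyEqOne f he m : M) = m - f m • e :=
  rfl

theorem projKerOfApplyEqOne_apply_coe (he : f e = 1) (x : ker f) :
    projKerOfApplyEqOne f he x = x := by
  ext
  simp [coe_projKerOfApplyEqOne_apply, mem_ker.mp x.2]

theorem projKerOfApplyEqOne_apply_self (he : f e = 1) : projKerOfApplyEqOne f he e = 0 := by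
  ext
  simp [coe_projKerOfApplyEqOne_apply, he]

theorem projKerOfApplyEqOne_comp_subtype (he : f e = 1) :
    (projKerOfApplyEqOne f he).comp (ker f).subtype = id :=
  LinearMap.ext (projKerOfApplyEqOne_apply_coe f he)

theorem finite_ker_of_apply_eq_one [Module.Finite R M] (he : f e = 1) : Module.Finite R (ker f) :=
  .of_surjective (projKerOfApplyEqOne f he) fun x => ⟨x, projKerOfApplyEqOne_apply_coe f he x⟩

theorem projective_ker_of_apply_eq_one [Projective R M] (he : f e = 1) : Projective R (ker f) :=
  .of_split _ _ (projKerOfApplyEqOne_comp_subtype f he)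

theorem free_ker_of_apply_eq_one [IsLocalRing R] [Module.Finite R M] [Projective R M]
    (he : f e = 1) : Free R (ker f) :=
  have := finite_ker_of_apply_eq_one f he
  have := projective_ker_of_apply_eq_one f he
  free_of_flat_of_isLocalRing

end projKerOfApplyEqOne

end LinearMap

namespace Module.Basis

variable {R M : Type*} [CommRing R] [AddCommGroup M] [Module R M]

noncomputable def finConsKer {n : ℕ} (f : M →ₗ[R] R) {e : M} (he : f e = 1)
    (c : Basis (Fin n) R (LinearMap.ker f)) : Basis (Fin (n + 1)) R M :=
  .mkFinCons e c (fun r x hx h => by simpa [LinearMap.mem_ker.mp hx, he] using congr_arg f h)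
    fun z => ⟨-f z, by simp [he]⟩

theorem coe_finConsKer {n : ℕ} (f : M →ₗ[R] R) {e : M} (he : f e = 1)
    (c : Basis (Fin n) R (LinearMap.ker f)) : ⇑(finConsKer f he c) = Fin.cons e ((↑) ∘ c) :=
  coe_mkFinCons ..

theorem apply_equiv_apply_equiv {ι M' : Type*} [AddCommGroup M'] [Module R M']
    (b : Basis ι R M) (b' : Basis ι R M') {φ : M →ₗ[R] M →ₗ[R] R} {φ' : M' →ₗ[R] M' →ₗ[R] R}
    (h : ∀ i j, φ' (b' i) (b' j) = φ (b i) (b j)) (x y : M) :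
    φ' (b.equiv b' (.refl ι) x) (b.equiv b' (.refl ι) y) = φ x y := by
  have : φ'.compl₁₂ (b.equiv b' (.refl ι)).toLinearMap (b.equiv b' (.refl ι)).toLinearMap = φ :=
    LinearMap.ext_basis b b fun i j => by simpa using h i j
  exact LinearMap.congr_fun₂ this x y

end Module.Basis

namespace LinearMap

variable {R M : Type*} [CommRing R] [AddCommGroup M] [Module R M] {φ : M →ₗ[R] M →ₗ[R] R}

theorem exists_isUnit_apply_self_of_isUnit_apply [IsLocalRing R] (h2 : IsUnit (2 : R))
    (hsymm : ∀ x y, φ x y = φ y x) {x y : M} (hxy : IsUnit (φ x y)) : ∃ z, IsUnit (φ z z) := by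
  by_contra! h
  have hpolar : 2 * φ x y = φ (x + y) (x + y) - φ x x - φ y y := by
    simp only [map_add, add_apply, hsymm y x]
    ring
  have hmem : ∀ z, φ z z ∈ IsLocalRing.maximalIdeal R := h
  have h2xy : 2 * φ x y ∈ IsLocalRing.maximalIdeal R :=
    hpolar ▸ sub_mem (sub_mem (hmem _) (hmem _)) (hmem _)
  exact h2xy (h2.mul hxy)

theorem exists_apply_self_eq_one_of_isUnit (hsq : ∀ u : R, IsUnit u → IsSquare u) {x : M}
    (hx : IsUnit (φ x x)) : ∃ e, φ e e = 1 := by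
  obtain ⟨v, hv⟩ := hsq _ hx
  have hv_unit : IsUnit v := isUnit_of_mul_isUnit_left (hv ▸ hx)
  refine ⟨Ring.inverse v • x, ?_⟩
  calc φ (Ring.inverse v • x) (Ring.inverse v • x)
      = (Ring.inverse v * v) * (Ring.inverse v * v) := by simp [hv]; ring
    _ = 1 := by rw [Ring.inverse_mul_cancel _ hv_unit, one_mul]

theorem exists_isUnit_apply_of_surjective [Free R M] [Nontrivial M] (hφ : Function.Surjective φ) :
    ∃ x y : M, IsUnit (φ x y) := by
  let b := Free.chooseBasis R M
  obtain ⟨i⟩ := b.index_nonempty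
  obtain ⟨x, hx⟩ := hφ (b.coord i)
  exact ⟨x, b i, by simp [hx]⟩

theorem exists_apply_self_eq_one_of_surjective [IsLocalRing R] [Free R M] [Nontrivial M]
    (h2 : IsUnit (2 : R)) (hsq : ∀ u : R, IsUnit u → IsSquare u) (hsymm : ∀ x y, φ x y = φ y x)
    (hφ : Function.Surjective φ) : ∃ e, φ e e = 1 := by
  obtain ⟨x, y, hxy⟩ := exists_isUnit_apply_of_surjective hφ
  obtain ⟨z, hz⟩ := exists_isUnit_apply_self_of_isUnit_apply h2 hsymm hxy
  exact exists_apply_self_eq_one_of_isUnit hsq hz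

theorem bijective_domRestrict₁₂_ker (hsymm : ∀ x y, φ x y = φ y x) (hφ : Function.Bijective φ)
    {e : M} (he : φ e e = 1) :
    Function.Bijective (φ.domRestrict₁₂ (ker (φ e)) (ker (φ e))) := by
  let π := projKerOfApplyEqOne (φ e) he
  have hπ : ∀ a : ker (φ e), ∀ m, φ a (π m) = φ a m := fun a m => by
    simp [π, coe_projKerOfApplyEqOne_apply, hsymm a e, mem_ker.mp a.2]
  constructor
  · intro a b hab
    refine Subtype.ext (hφ.1 (ext fun m => ?_))
    rw [← hπ a, ← hπ b]
    exact LinearMap.congr_fun hab (π m)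
  · intro F
    obtain ⟨m, hm⟩ := hφ.2 (F ∘ₗ π)
    have hm_mem : m ∈ ker (φ e) := by
      simp [mem_ker, hsymm e, hm, π, projKerOfApplyEqOne_apply_self]
    refine ⟨⟨m, hm_mem⟩, ext fun w => ?_⟩
    rw [domRestrict₁₂_apply, hm, comp_apply, projKerOfApplyEqOne_apply_coe]

theorem apply_finConsKer_apply_finConsKer (hsymm : ∀ x y, φ x y = φ y x) {e : M}
    (he : φ e e = 1) {n : ℕ} (c : Basis (Fin n) R (ker (φ e)))
    (hc : ∀ i j, φ (c i) (c j) = if i = j then 1 else 0) (i j : Fin (n + 1)) :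
    φ (Basis.finConsKer (φ e) he c i) (Basis.finConsKer (φ e) he c j) =
      if i = j then 1 else 0 := by
  have hce : ∀ k, φ e (c k) = 0 := fun k => mem_ker.mp (c k).2
  rw [Basis.coe_finConsKer]
  cases i using Fin.cases <;> cases j using Fin.cases <;>
    simp [he, hc, hce, hsymm _ e, Fin.succ_ne_zero, (Fin.succ_ne_zero _).symm]

end LinearMap

open LinearMap in
theorem exists_orthonormal_basis_of_finrank_eq {R : Type*} [CommRing R] [IsLocalRing R]
    (h2 : IsUnit (2 : R)) (hsq : ∀ u : R, IsUnit u → IsSquare u) {n : ℕ} (M : Type*)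
    [AddCommGroup M] [Module R M] [Module.Finite R M] [Free R M] (φ : M →ₗ[R] M →ₗ[R] R)
    (hsymm : ∀ x y, φ x y = φ y x) (hφ : Function.Bijective φ) (hM : finrank R M = n) :
    ∃ b : Basis (Fin n) R M, ∀ i j, φ (b i) (b j) = if i = j then 1 else 0 := by
  induction n generalizing M with
  | zero => exact ⟨(finBasis R M).reindex (finCongr hM), fun i => i.elim0⟩
  | succ n ih =>
    have := nontrivial_of_finrank_eq_succ hM
    obtain ⟨e, he⟩ := exists_apply_self_eq_one_of_surjective h2 hsq hsymm hφ.2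
    have := finite_ker_of_apply_eq_one (φ e) he
    have := free_ker_of_apply_eq_one (φ e) he
    have hW : finrank R (ker (φ e)) = n := by
      have := finrank_eq_card_basis (Basis.finConsKer (φ e) he (finBasis R (ker (φ e))))
      rw [Fintype.card_fin] at this
      omega
    obtain ⟨c, hc⟩ := ih (ker (φ e)) (φ.domRestrict₁₂ _ _) (fun x y => hsymm x y)
      (bijective_domRestrict₁₂_ker hsymm hφ he) hW
    exact ⟨_, apply_finConsKer_apply_finConsKer hsymm he c hc⟩

/-- Let `R` be a local ring in which `2` is a unit and in which every unit is a square, and let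
`(M, φ)` be a finite free `R`-module with a nondegenerate symmetric bilinear form.  Then `M`
admits an orthonormal basis for `φ`; consequently, two finite free `R`-modules with
nondegenerate symmetric bilinear forms are isometric if and only if they have the same rank. -/
theorem exists_orthonormal_basis_and_isometric_iff_finrank_eq
    (R : Type*) [CommRing R] [IsLocalRing R]
    (h2 : IsUnit (2 : R)) (hsq : ∀ u : R, IsUnit u → IsSquare u)
    (M : Type*) [AddCommGroup M] [Module R M] [Module.Finite R M] [Module.Free R M]
    (φ : M →ₗ[R] M →ₗ[R] R) (hsymm : ∀ x y : M, φ x y = φ y x)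
    (hnd : Function.Bijective fun m : M => φ.flip m) :
    (∃ (n : ℕ) (b : Module.Basis (Fin n) R M),
      ∀ i j : Fin n, φ (b i) (b j) = if i = j then 1 else 0) ∧
    ∀ (M' : Type*) [AddCommGroup M'] [Module R M'] [Module.Finite R M'] [Module.Free R M']
      (φ' : M' →ₗ[R] M' →ₗ[R] R), (∀ x y : M', φ' x y = φ' y x) →
      Function.Bijective (fun m : M' => φ'.flip m) →
      ((∃ e : M ≃ₗ[R] M', ∀ x y : M, φ' (e x) (e y) = φ x y) ↔
        Module.finrank R M = Module.finrank R M') := by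
  obtain ⟨b, hb⟩ := exists_orthonormal_basis_of_finrank_eq h2 hsq M φ hsymm
    (by rwa [show φ.flip = φ from LinearMap.ext₂ fun x y => hsymm y x] at hnd) rfl
  refine ⟨⟨_, b, hb⟩, fun M' _ _ _ _ φ' hsymm' hnd' =>
    ⟨fun ⟨e, _⟩ => e.finrank_eq, fun hMM' => ?_⟩⟩
  obtain ⟨b', hb'⟩ := exists_orthonormal_basis_of_finrank_eq h2 hsq M' φ' hsymm'
    (by rwa [show φ'.flip = φ' from LinearMap.ext₂ fun x y => hsymm' y x] at hnd') hMM'.symm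
  exact ⟨b.equiv b' (.refl _), b.apply_equiv_apply_equiv b' fun i j => by rw [hb, hb']⟩
end

section
/- Let R be a commutative ring, n ≥ 1, and h an invertible n × n matrix over R. Then the invertible 2n × 2n block diagonal matrix with diagonal blocks h and h⁻¹ is a product of elementary matrices, i.e. of transvection matrices of the form 1 + c·Eᵢⱼ with i ≠ j. -/
/-! Whitehead's lemma. The block unitriangular matrices `[1 A; 0 1]` and `[1 0; A 1]` are products
of transvections, since `A ↦ [1 A; 0 1]` turns sums into products and `[1 c•Eᵢⱼ; 0 1]` is itself a
transvection. If `h g = 1 = g h`, then `[1 h; 0 1] [1 0; -g 1] [1 h; 0 1] = [0 h; -g 0]`, and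
`diag(h, g) = [0 h; -g 0] [0 -1; 1 0]`, the second factor being the case `h = g = -1`. -/

namespace Matrix

section Transvections

variable (ι R : Type*) [Fintype ι] [DecidableEq ι] [CommRing R]

def transvectionProducts : Submonoid (Matrix ι ι R) :=
  MonoidHom.mrange (FreeMonoid.lift (TransvectionStruct.toMatrix (n := ι) (R := R)))

variable {ι R}

theorem mem_transvectionProducts_iff {M : Matrix ι ι R} :
    M ∈ transvectionProducts ι R ↔
      ∃ L : List (TransvectionStruct ι R), M = (L.map TransvectionStruct.toMatrix).prod := by
  simp only [transvectionProducts, MonoidHom.mem_mrange, FreeMonoid.lift_apply]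
  constructor
  · rintro ⟨x, hx⟩
    exact ⟨x.toList, hx.symm⟩
  · rintro ⟨L, hL⟩
    exact ⟨FreeMonoid.ofList L, hL.symm⟩

theorem transvection_mem_transvectionProducts {i j : ι} (hij : i ≠ j) (c : R) :
    transvection i j c ∈ transvectionProducts ι R :=
  ⟨FreeMonoid.of ⟨i, j, hij, c⟩, FreeMonoid.lift_eval_of _ _⟩

end Transvections

section Blocks

variable {m n R : Type*}

theorem fromBlocks_one_add_zero_one [Ring R] [Fintype m] [Fintype n] [DecidableEq m]
    [DecidableEq n] (A B : Matrix m n R) :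
    (fromBlocks 1 (A + B) 0 1 : Matrix (m ⊕ n) (m ⊕ n) R) =
      fromBlocks 1 A 0 1 * fromBlocks 1 B 0 1 := by
  simp [fromBlocks_multiply, add_comm]

theorem fromBlocks_one_zero_add_one [Ring R] [Fintype m] [Fintype n] [DecidableEq m]
    [DecidableEq n] (A B : Matrix n m R) :
    (fromBlocks 1 0 (A + B) 1 : Matrix (m ⊕ n) (m ⊕ n) R) =
      fromBlocks 1 0 A 1 * fromBlocks 1 0 B 1 := by
  simp [fromBlocks_multiply, add_comm]

variable [CommRing R] [DecidableEq m] [DecidableEq n]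

theorem fromBlocks_one_single_zero_one (i : m) (j : n) (c : R) :
    (fromBlocks 1 (single i j c) 0 1 : Matrix (m ⊕ n) (m ⊕ n) R) =
      transvection (Sum.inl i) (Sum.inr j) c := by
  ext (x | x) (y | y) <;> simp [transvection, one_apply, single_apply]

theorem fromBlocks_one_zero_single_one (i : n) (j : m) (c : R) :
    (fromBlocks 1 0 (single i j c) 1 : Matrix (m ⊕ n) (m ⊕ n) R) =
      transvection (Sum.inr i) (Sum.inl j) c := by
  ext (x | x) (y | y) <;> simp [transvection, one_apply, single_apply]

variable [Fintype m] [Fintype n]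

theorem fromBlocks_one_zero_one_mem_transvectionProducts (A : Matrix m n R) :
    fromBlocks 1 A 0 1 ∈ transvectionProducts (m ⊕ n) R := by
  induction A using Matrix.induction_on' with
  | h_zero => rw [fromBlocks_one]; exact one_mem _
  | h_add A B hA hB => simpa [fromBlocks_one_add_zero_one] using mul_mem hA hB
  | h_std_basis i j c =>
    simpa [fromBlocks_one_single_zero_one] using
      transvection_mem_transvectionProducts Sum.inl_ne_inr c

theorem fromBlocks_one_zero_zero_one_mem_transvectionProducts (A : Matrix n m R) :
    fromBlocks 1 0 A 1 ∈ transvectionProducts (m ⊕ n) R := by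
  induction A using Matrix.induction_on' with
  | h_zero => rw [fromBlocks_one]; exact one_mem _
  | h_add A B hA hB => simpa [fromBlocks_one_zero_add_one] using mul_mem hA hB
  | h_std_basis i j c =>
    simpa [fromBlocks_one_zero_single_one] using
      transvection_mem_transvectionProducts Sum.inr_ne_inl c

theorem fromBlocks_zero_neg_zero_mem_transvectionProducts {h : Matrix m n R} {g : Matrix n m R}
    (hg : h * g = 1) (gh : g * h = 1) :
    fromBlocks 0 h (-g) 0 ∈ transvectionProducts (m ⊕ n) R := by
  have whitehead :
      fromBlocks 0 h (-g) 0 = fromBlocks 1 h 0 1 * fromBlocks 1 0 (-g) 1 * fromBlocks 1 h 0 1 := by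
    simp [fromBlocks_multiply, hg, gh]
  rw [whitehead]
  exact mul_mem (mul_mem (fromBlocks_one_zero_one_mem_transvectionProducts h)
    (fromBlocks_one_zero_zero_one_mem_transvectionProducts _))
    (fromBlocks_one_zero_one_mem_transvectionProducts h)

theorem fromBlocks_zero_zero_mem_transvectionProducts {h g : Matrix n n R}
    (hg : h * g = 1) (gh : g * h = 1) :
    fromBlocks h 0 0 g ∈ transvectionProducts (n ⊕ n) R := by
  have factor : fromBlocks h 0 0 g = fromBlocks 0 h (-g) 0 * fromBlocks 0 (-1) (-(-1)) 0 := by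
    simp [fromBlocks_multiply]
  rw [factor]
  exact mul_mem (fromBlocks_zero_neg_zero_mem_transvectionProducts hg gh)
    (fromBlocks_zero_neg_zero_mem_transvectionProducts (by simp) (by simp))

end Blocks

end Matrix

theorem fromBlocks_inv_eq_prod_transvections_general {R : Type*} [CommRing R] {n : ℕ}
    (h : Matrix (Fin n) (Fin n) R) (hh : IsUnit h) :
    ∃ L : List (Matrix.TransvectionStruct (Fin n ⊕ Fin n) R),
      Matrix.fromBlocks h 0 0 h⁻¹ = (L.map Matrix.TransvectionStruct.toMatrix).prod := by
  have hdet : IsUnit h.det := (Matrix.isUnit_iff_isUnit_det h).mp hh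
  exact Matrix.mem_transvectionProducts_iff.mp <|
    Matrix.fromBlocks_zero_zero_mem_transvectionProducts
      (Matrix.mul_nonsing_inv h hdet) (Matrix.nonsing_inv_mul h hdet)

/-- Let `R` be a commutative ring, `n ≥ 1`, and `h` an invertible `n × n` matrix over `R`.
Then the invertible `2n × 2n` block diagonal matrix with diagonal blocks `h` and `h⁻¹` is a
product of elementary (transvection) matrices. -/
theorem fromBlocks_inv_eq_prod_transvections {R : Type*} [CommRing R] {n : ℕ} (hn : 1 ≤ n)
    (h : Matrix (Fin n) (Fin n) R) (hh : IsUnit h) :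
    ∃ L : List (Matrix.TransvectionStruct (Fin n ⊕ Fin n) R),
      Matrix.fromBlocks h 0 0 h⁻¹ = (L.map Matrix.TransvectionStruct.toMatrix).prod :=
  fromBlocks_inv_eq_prod_transvections_general h hh
end

section
/- Let R be a commutative ring in which 2 is a unit, let M be a finitely generated projective R-module, and let φ be a symmetric bilinear form on M such that the adjoint map M → Hom_R(M, R) is bijective. If N ≤ M is a submodule to which φ restricts nondegenerately, then N is a finitely generated projective R-module and the adjoint map N^⊥ → Hom_R(N^⊥, R) of the restriction of φ to the orthogonal complement N^⊥ = {x ∈ M : φ(x, n) = 0 for all n ∈ N} is bijective; that is, the orthogonal complement of a nondegenerate subspace of an inner product space is again an inner product space. -/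
/-- The orthogonal complement `N^⊥ = {x ∈ M | φ(x, n) = 0 for all n ∈ N}` of a submodule `N`
with respect to a bilinear form `φ`. -/
def orthComplement {R M : Type*} [CommRing R] [AddCommGroup M] [Module R M]
    (φ : M →ₗ[R] M →ₗ[R] R) (N : Submodule R M) : Submodule R M where
  carrier := {x : M | ∀ n ∈ N, φ x n = 0}
  zero_mem' := by intro n hn; simp
  add_mem' := by
    intro a b ha hb n hn
    simp [ha n hn, hb n hn]
  smul_mem' := by
    intro c a ha n hn
    simp [ha n hn]

section

variable {R M : Type*} [CommRing R] [AddCommGroup M] [Module R M] {φ : M →ₗ[R] M →ₗ[R] R}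

theorem le_orthComplement_orthComplement (hsymm : ∀ x y : M, φ x y = φ y x) (N : Submodule R M) :
    N ≤ orthComplement φ (orthComplement φ N) := fun n hn w hw => by
  rw [hsymm]
  exact hw n hn

/- On `M = N ⊕ W` a functional `φ(−, w)` is determined by its restriction to `W`, and every
functional on `W` extends by zero on `N`. -/
theorem restrictsNondeg_of_isCompl (hnd : Function.Bijective fun m : M => φ.flip m)
    {N W : Submodule R M} (hc : IsCompl N W) (hNW : N ≤ orthComplement φ W)
    (hWN : W ≤ orthComplement φ N) : RestrictsNondeg φ W := by
  constructor
  · intro a b hab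
    refine Subtype.ext (hnd.1 (LinearMap.ext_on_codisjoint hc.codisjoint ?_ ?_))
    · intro n hn
      simp [hNW hn a a.2, hNW hn b b.2]
    · intro w hw
      exact LinearMap.congr_fun hab ⟨w, hw⟩
  · intro f
    set p := W.projectionOnto N hc.symm
    obtain ⟨m, hm⟩ := hnd.2 (f ∘ₗ p)
    refine ⟨p m, LinearMap.ext fun y => ?_⟩
    have hmN : m - p m ∈ N := W.sub_projection_mem hc.symm m
    calc φ y (p m) = φ y m - φ y (m - p m) := by simp
      _ = f y := by
        rw [hWN y.2 _ hmN, sub_zero]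
        simpa [p] using LinearMap.congr_fun hm y

namespace RestrictsNondeg

variable {N : Submodule R M}

protected theorem bijective (hN : RestrictsNondeg φ N) :
    Function.Bijective ((φ.domRestrict N).flip.domRestrict N) :=
  hN

noncomputable def orthogonalProjection (hN : RestrictsNondeg φ N) : M →ₗ[R] N :=
  (LinearEquiv.ofBijective ((φ.domRestrict N).flip.domRestrict N) hN.bijective).symm ∘ₗ
    (φ.domRestrict N).flip

theorem apply_orthogonalProjection (hN : RestrictsNondeg φ N) (m : M) (x : N) :
    φ x (hN.orthogonalProjection m) = φ x m :=
  LinearMap.congr_fun (LinearEquiv.apply_ofBijective_symm_apply (h := hN.bijective) _ _) x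

theorem orthogonalProjection_apply_self (hN : RestrictsNondeg φ N) (n : N) :
    hN.orthogonalProjection n = n :=
  LinearEquiv.ofBijective_symm_apply_apply (h := hN.bijective) _ n

theorem ker_orthogonalProjection (hsymm : ∀ x y : M, φ x y = φ y x) (hN : RestrictsNondeg φ N) :
    LinearMap.ker hN.orthogonalProjection = orthComplement φ N := by
  ext m
  have : hN.orthogonalProjection m = 0 ↔ ∀ x : N, φ x m = 0 := by
    rw [← hN.bijective.injective.eq_iff, map_zero, LinearMap.ext_iff]
    simp [hN.apply_orthogonalProjection]
  simp [this, orthComplement, hsymm m]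

theorem isCompl_orthComplement (hsymm : ∀ x y : M, φ x y = φ y x) (hN : RestrictsNondeg φ N) :
    IsCompl N (orthComplement φ N) :=
  hN.ker_orthogonalProjection hsymm ▸ LinearMap.isCompl_of_proj hN.orthogonalProjection_apply_self

end RestrictsNondeg

end

theorem orthComplement_of_nondegenerate_is_inner_product_space_general
    {R M : Type*} [CommRing R] [AddCommGroup M] [Module R M]
    [Module.Finite R M] [Module.Projective R M]
    (φ : M →ₗ[R] M →ₗ[R] R) (hsymm : ∀ x y : M, φ x y = φ y x)
    (hnd : Function.Bijective fun m : M => φ.flip m)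
    (N : Submodule R M) (hN : RestrictsNondeg φ N) :
    Module.Finite R N ∧ Module.Projective R N ∧ RestrictsNondeg φ (orthComplement φ N) :=
  ⟨.of_surjective hN.orthogonalProjection fun n => ⟨n, hN.orthogonalProjection_apply_self n⟩,
    .of_split N.subtype hN.orthogonalProjection (LinearMap.ext hN.orthogonalProjection_apply_self),
    restrictsNondeg_of_isCompl hnd (hN.isCompl_orthComplement hsymm)
      (le_orthComplement_orthComplement hsymm N) le_rfl⟩

/-- Let `R` be a commutative ring with `2` a unit and `(M, φ)` an inner product space over `R`.
If `N ≤ M` is a submodule to which `φ` restricts nondegenerately, then `N` is a finitely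
generated projective `R`-module and `φ` restricts nondegenerately to the orthogonal
complement `N^⊥`; that is, the orthogonal complement of a nondegenerate subspace of an inner
product space is again an inner product space. -/
theorem orthComplement_of_nondegenerate_is_inner_product_space
    {R M : Type*} [CommRing R] [AddCommGroup M] [Module R M]
    (h2 : IsUnit (2 : R)) [Module.Finite R M] [Module.Projective R M]
    (φ : M →ₗ[R] M →ₗ[R] R) (hsymm : ∀ x y : M, φ x y = φ y x)
    (hnd : Function.Bijective fun m : M => φ.flip m)
    (N : Submodule R M) (hN : RestrictsNondeg φ N) :
    Module.Finite R N ∧ Module.Projective R N ∧ RestrictsNondeg φ (orthComplement φ N) :=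
  orthComplement_of_nondegenerate_is_inner_product_space_general φ hsymm hnd N hN
end
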